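/- arXiv:2207.00277 — 13 statements merged into one kernel-verified Lean document; each statement's English description precedes it below -/
import Mathlib

section
/- Let n and k be positive integers with k divides n and i an integer with 1 ≤ i ≤ k−1. Then k / gcd(k, i) divides C(n, i). -/
namespace Nat

theorem div_gcd_dvd_of_dvd_mul {a b c : ℕ} (h : a ∣ b * c) (hb : 0 < b) : a / gcd a b ∣ c := by
  rw [div_dvd_iff_dvd_mul (gcd_dvd_left a b) (gcd_pos_of_pos_right a hb), ← gcd_mul_right]
  exact dvd_gcd (dvd_mul_right a c) h

theorem dvd_mul_choose : ∀ n i : ℕ, n ∣ i * n.choose i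
  | 0, 0 => dvd_refl 0
  | 0, _ + 1 => by simp
  | _ + 1, 0 => dvd_zero _
  | m + 1, j + 1 => ⟨m.choose j, by rw [mul_comm, ← add_one_mul_choose_eq]⟩

end Nat

theorem k_gcd_quotient_dvd_choose_general (n k i : ℕ)
    (hdvd : k ∣ n) (hi : 1 ≤ i) :
    (k / Nat.gcd k i) ∣ Nat.choose n i :=
  Nat.div_gcd_dvd_of_dvd_mul (hdvd.trans (Nat.dvd_mul_choose n i)) hi

theorem k_gcd_quotient_dvd_choose (n k i : ℕ) (hn : 0 < n) (hk : 0 < k)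
    (hdvd : k ∣ n) (hi : 1 ≤ i) (hik : i ≤ k - 1) :
    (k / Nat.gcd k i) ∣ Nat.choose n i :=
  k_gcd_quotient_dvd_choose_general n k i hdvd hi
end

section
/- Let k ≥ 2, r, j be integers with 1 ≤ r ≤ k−2, j ≥ 3, and n = j·k + r. Then (j/2)·∑_{i=1}^{r−1} C(n,i) + j·C(n,r) + ((j−1)/2)·∑_{i=r+1}^{k−1} C(n,i) < C(n,k). -/
/-!
Put `p = n + 1 - k` and `j = d + 3`. Doubled, the inequality reads
`(d + 2) S_{k-1} + S_{r-1} + (d + 4) C(n, r) < 2 C(n, k)`, where `S_m = ∑_{1 ≤ i ≤ m} C(n, i)`.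
For `i < k` the ratio `C(n, i) / C(n, i + 1) = (i + 1) / (n - i)` is at most `k / p < 1`, so
`C(n, i) ≤ (k / p) ^ (k - i) C(n, k)`, and `S_m` is dominated by the geometric series
`C(n, m) p / (p - k)`. These bounds reduce the claim to a polynomial inequality in `d`, `r` and
`k - r`, made uniform in `k - r` by Bernoulli's inequality.
-/

open Finset

namespace Nat

theorem mul_choose_le_mul_choose_succ {n k p i : ℕ} (hp : p + k ≤ n + 1) (hi : i < k) :
    p * n.choose i ≤ k * n.choose (i + 1) := by
  refine Nat.le_of_mul_le_mul_right ?_ i.succ_pos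
  calc p * n.choose i * (i + 1) = (p * (i + 1)) * n.choose i := by ring
    _ ≤ ((n - i) * k) * n.choose i := by gcongr <;> omega
    _ = k * n.choose (i + 1) * (i + 1) := by
      rw [mul_comm, ← mul_assoc, ← choose_succ_right_eq]; ring

theorem pow_mul_choose_le_pow_mul_choose_add {n k p i t : ℕ} (hp : p + k ≤ n + 1)
    (hit : i + t ≤ k) : p ^ t * n.choose i ≤ k ^ t * n.choose (i + t) := by
  induction t with
  | zero => simp
  | succ t ih =>
    calc p ^ (t + 1) * n.choose i = p * (p ^ t * n.choose i) := by ring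
      _ ≤ p * (k ^ t * n.choose (i + t)) := Nat.mul_le_mul_left _ (ih (by omega))
      _ = k ^ t * (p * n.choose (i + t)) := by ring
      _ ≤ k ^ t * (k * n.choose (i + t + 1)) :=
        Nat.mul_le_mul_left _ (mul_choose_le_mul_choose_succ hp (by omega))
      _ = k ^ (t + 1) * n.choose (i + (t + 1)) := by ring_nf

theorem mul_sum_choose_le_mul_choose {n k p a m : ℕ} (hp : p + k ≤ n + 1) (ha : a + k ≤ p)
    (hm : m ≤ k) : a * ∑ i ∈ Icc 1 m, n.choose i ≤ p * n.choose m := by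
  induction m with
  | zero => simp
  | succ m ih =>
    rw [sum_Icc_succ_top (by omega), mul_add]
    calc a * ∑ i ∈ Icc 1 m, n.choose i + a * n.choose (m + 1)
        ≤ k * n.choose (m + 1) + a * n.choose (m + 1) := Nat.add_le_add_right
          ((ih (by omega)).trans (mul_choose_le_mul_choose_succ hp (by omega))) _
      _ ≤ p * n.choose (m + 1) := by rw [← add_mul]; gcongr; omega

end Nat

theorem sum_Icc_one_eq_add_add_sum_Icc {M : Type*} [AddCommMonoid M] (f : ℕ → M) {r l : ℕ}
    (hr : 1 ≤ r) (hrl : r ≤ l) :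
    ∑ i ∈ Icc 1 l, f i = ∑ i ∈ Icc 1 (r - 1), f i + f r + ∑ i ∈ Icc (r + 1) l, f i := by
  obtain ⟨s, rfl⟩ : ∃ s, r = s + 1 := ⟨r - 1, by omega⟩
  have hIcc (b : ℕ) : Icc 1 b = Ioc 0 b := Icc_add_one_left_eq_Ioc 0 b
  rw [Nat.add_sub_cancel, Icc_add_one_left_eq_Ioc, hIcc, hIcc,
    ← sum_Ioc_consecutive f (Nat.zero_le (s + 1)) hrl, sum_Ioc_succ_top (Nat.zero_le s)]

/-- With `k = r + m + 2`, `p = (d + 2) k + r + 1` and `a = (d + 1) k + r + 1`, this says that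
`(d + 2) k / a + (k / p) ^ (m + 3) p / a + (d + 4) (k / p) ^ (m + 2) < 2`, the sum of the bounds on
the three parts of `weighted_sum_choose_lt` relative to `C(n, k)`. -/
theorem pow_mul_lt_pow_mul_of_one_le (d r m : ℕ) (hr : 1 ≤ r) :
    (r + m + 2) ^ (m + 2) * ((r + m + 2) + (d + 4) * ((d + 1) * (r + m + 2) + r + 1))
      < ((d + 2) * (r + m + 2) + r + 1) ^ (m + 2) * (d * (r + m + 2) + 2 * r + 2) := by
  set k := r + m + 2 with hk
  set p := (d + 2) * k + r + 1 with hp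
  have hbern : 1 + (d + 1) * m ≤ (d + 2) ^ m := by
    simpa [mul_comm, add_comm 1] using
      one_add_le_pow_of_two_add_nonneg (Nat.zero_le (2 + (d + 1))) m
  have hbase : k ^ 2 * (k + (d + 4) * ((d + 1) * k + r + 1))
      < p ^ 2 * (1 + (d + 1) * m) * (d * k + 2 * r + 2) := by
    -- after `r = s + 1`, the difference is a polynomial in `d, s, m` with positive coefficients
    obtain ⟨s, rfl⟩ : ∃ s, r = s + 1 := ⟨r - 1, by omega⟩
    zify
    rw [← sub_pos]
    simp only [hk, hp]
    push_cast
    ring_nf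
    positivity
  calc k ^ (m + 2) * (k + (d + 4) * ((d + 1) * k + r + 1))
      = k ^ m * (k ^ 2 * (k + (d + 4) * ((d + 1) * k + r + 1))) := by ring
    _ < k ^ m * (p ^ 2 * (1 + (d + 1) * m) * (d * k + 2 * r + 2)) := by gcongr
    _ ≤ k ^ m * (p ^ 2 * (d + 2) ^ m * (d * k + 2 * r + 2)) := by gcongr
    _ = ((d + 2) * k) ^ m * p ^ 2 * (d * k + 2 * r + 2) := by rw [mul_pow]; ring
    _ ≤ p ^ m * p ^ 2 * (d * k + 2 * r + 2) := by gcongr; omega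
    _ = p ^ (m + 2) * (d * k + 2 * r + 2) := by ring

theorem weighted_sum_choose_lt {d r m k n : ℕ} (hr : 1 ≤ r) (hk : k = r + m + 2)
    (hn : n = (d + 3) * k + r) :
    (d + 2) * ∑ i ∈ Icc 1 (k - 1), n.choose i + ∑ i ∈ Icc 1 (r - 1), n.choose i
      + (d + 4) * n.choose r < 2 * n.choose k := by
  set p := (d + 2) * k + r + 1
  set a := (d + 1) * k + r + 1
  have hp : p + k ≤ n + 1 := le_of_eq (by rw [hn]; ring)
  have ha : a + k ≤ p := le_of_eq (by ring)
  have hck : 0 < n.choose k := Nat.choose_pos (by rw [hn]; nlinarith)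
  have hSK : a * ∑ i ∈ Icc 1 (k - 1), n.choose i ≤ k * n.choose k := by
    refine (Nat.mul_sum_choose_le_mul_choose hp ha (by omega)).trans ?_
    simpa [Nat.sub_add_cancel (by omega : 1 ≤ k)] using
      Nat.mul_choose_le_mul_choose_succ hp (by omega : k - 1 < k)
  have hSA :
      a * p ^ (m + 2) * ∑ i ∈ Icc 1 (r - 1), n.choose i ≤ k ^ (m + 3) * n.choose k := by
    calc a * p ^ (m + 2) * ∑ i ∈ Icc 1 (r - 1), n.choose i
        = p ^ (m + 2) * (a * ∑ i ∈ Icc 1 (r - 1), n.choose i) := by ring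
      _ ≤ p ^ (m + 2) * (p * n.choose (r - 1)) :=
        Nat.mul_le_mul_left _ (Nat.mul_sum_choose_le_mul_choose hp ha (by omega))
      _ = p ^ (m + 3) * n.choose (r - 1) := by ring
      _ ≤ k ^ (m + 3) * n.choose (r - 1 + (m + 3)) :=
        Nat.pow_mul_choose_le_pow_mul_choose_add hp (by omega)
      _ = k ^ (m + 3) * n.choose k := by rw [show r - 1 + (m + 3) = k by omega]
  have hcr : p ^ (m + 2) * n.choose r ≤ k ^ (m + 2) * n.choose k := by
    simpa [show r + (m + 2) = k by omega] using
      Nat.pow_mul_choose_le_pow_mul_choose_add (t := m + 2) hp (by omega : r + (m + 2) ≤ k)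
  have hnum := pow_mul_lt_pow_mul_of_one_le d r m hr
  rw [← hk] at hnum
  refine Nat.lt_of_mul_lt_mul_left (a := a * p ^ (m + 2)) ?_
  calc a * p ^ (m + 2) * ((d + 2) * ∑ i ∈ Icc 1 (k - 1), n.choose i
        + ∑ i ∈ Icc 1 (r - 1), n.choose i + (d + 4) * n.choose r)
      = (d + 2) * p ^ (m + 2) * (a * ∑ i ∈ Icc 1 (k - 1), n.choose i)
        + a * p ^ (m + 2) * ∑ i ∈ Icc 1 (r - 1), n.choose i
        + (d + 4) * a * (p ^ (m + 2) * n.choose r) := by ring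
    _ ≤ (d + 2) * p ^ (m + 2) * (k * n.choose k) + k ^ (m + 3) * n.choose k
        + (d + 4) * a * (k ^ (m + 2) * n.choose k) := by gcongr
    _ = n.choose k * (k ^ (m + 2) * (k + (d + 4) * a) + (d + 2) * k * p ^ (m + 2)) := by ring
    _ < n.choose k * (p ^ (m + 2) * (d * k + 2 * r + 2) + (d + 2) * k * p ^ (m + 2)) := by
        gcongr
    _ = a * p ^ (m + 2) * (2 * n.choose k) := by ring

open Finset in
theorem farkas_ineq_j_ge_three_general (k r j n : ℕ) (hr1 : 1 ≤ r) (hr2 : r ≤ k - 2)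
    (hj : 3 ≤ j) (hn : n = j * k + r) :
    ((j : ℚ) / 2) * ∑ i ∈ Icc 1 (r - 1), (Nat.choose n i : ℚ)
      + (j : ℚ) * (Nat.choose n r : ℚ)
      + (((j : ℚ) - 1) / 2) * ∑ i ∈ Icc (r + 1) (k - 1), (Nat.choose n i : ℚ)
      < (Nat.choose n k : ℚ) := by
  obtain ⟨d, rfl⟩ : ∃ d, j = d + 3 := ⟨j - 3, by omega⟩
  obtain ⟨m, hkm⟩ : ∃ m, k = r + m + 2 := ⟨k - r - 2, by omega⟩
  have key := weighted_sum_choose_lt hr1 hkm hn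
  rw [sum_Icc_one_eq_add_add_sum_Icc _ hr1 (by omega : r ≤ k - 1)] at key
  have hkey : ((d + 2 : ℕ) : ℚ) * (∑ i ∈ Icc 1 (r - 1), (n.choose i : ℚ) + n.choose r
      + ∑ i ∈ Icc (r + 1) (k - 1), (n.choose i : ℚ))
      + ∑ i ∈ Icc 1 (r - 1), (n.choose i : ℚ)
      + ((d + 4 : ℕ) : ℚ) * n.choose r < 2 * n.choose k := by exact_mod_cast key
  push_cast at hkey ⊢
  linarith

open Finset in
theorem farkas_ineq_j_ge_three (k r j n : ℕ) (hk : 2 ≤ k) (hr1 : 1 ≤ r) (hr2 : r ≤ k - 2)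
    (hj : 3 ≤ j) (hn : n = j * k + r) :
    ((j : ℚ) / 2) * ∑ i ∈ Icc 1 (r - 1), (Nat.choose n i : ℚ)
      + (j : ℚ) * (Nat.choose n r : ℚ)
      + (((j : ℚ) - 1) / 2) * ∑ i ∈ Icc (r + 1) (k - 1), (Nat.choose n i : ℚ)
      < (Nat.choose n k : ℚ) :=
  farkas_ineq_j_ge_three_general k r j n hr1 hr2 hj hn
end

section
/- Let k ≥ 3 and r be integers with 1 ≤ r ≤ k−2, r ≡ k (mod 2), and n = 2k + r. Then ∑_{i=1}^{(k+r)/2 − 1} C(n,i) + (1/2)·C(n,(k+r)/2) + C(n,r) < C(n,k). -/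
open Finset

/-- Geometric-type bound on partial sums of binomial coefficients. -/
lemma aux_sum_choose_le (n : ℕ) : ∀ m : ℕ, 2 * m ≤ n →
    ((n : ℚ) - 2 * m + 1) * ∑ i ∈ range (m + 1), (n.choose i : ℚ)
      ≤ ((n : ℚ) - m + 1) * (n.choose m : ℚ) := by
  intro m
  induction m with
  | zero => intro _; simp
  | succ m ih =>
    intro h
    have hm : 2 * m ≤ n := by omega
    have hmn : m < n := by omega
    have IH := ih hm
    have hmq : (m : ℚ) ≤ n := by exact_mod_cast hmn.le
    have hmq2 : 2*(m:ℚ) + 2 ≤ n := by exact_mod_cast h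
    have hid : (n.choose (m + 1) : ℚ) * (m + 1) = (n.choose m : ℚ) * ((n : ℚ) - m) := by
      have h0 := Nat.choose_succ_right_eq n m
      have hcast : ((n.choose (m + 1) * (m + 1) : ℕ) : ℚ) = ((n.choose m * (n - m) : ℕ) : ℚ) := by
        exact_mod_cast congrArg (Nat.cast : ℕ → ℚ) h0
      push_cast [Nat.cast_sub hmn.le] at hcast
      linarith [hcast]
    rw [Finset.sum_range_succ]
    have hT : (0:ℚ) ≤ ∑ i ∈ range (m + 1), (n.choose i : ℚ) :=
      Finset.sum_nonneg fun i _ => by positivity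
    have hC : (0:ℚ) ≤ (n.choose m : ℚ) := by positivity
    have hC' : (0:ℚ) ≤ (n.choose (m+1) : ℚ) := by positivity
    set T := ∑ i ∈ range (m + 1), (n.choose i : ℚ) with hTdef
    have h1 : ((n:ℚ) - 2*m - 1) * ((n:ℚ) - m + 1) * T ≤ ((n:ℚ) - 2*m + 1) * ((n:ℚ) - m) * T := by
      apply mul_le_mul_of_nonneg_right _ hT
      nlinarith [hmq, hmq2]
    have h2 : ((n:ℚ) - 2*m + 1) * ((n:ℚ) - m) * T
        ≤ ((n:ℚ) - m + 1) * ((n:ℚ) - m) * (n.choose m : ℚ) := by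
      nlinarith [IH, hmq]
    have h3 : ((n:ℚ) - m + 1) * ((n:ℚ) - m) * (n.choose m : ℚ)
        = ((n:ℚ) - m + 1) * (((m:ℚ) + 1) * (n.choose (m+1) : ℚ)) := by
      nlinarith [hid]
    have hpos : (0:ℚ) < (n:ℚ) - m + 1 := by linarith
    have h4 : ((n:ℚ) - 2*m - 1) * T ≤ ((m:ℚ) + 1) * (n.choose (m+1) : ℚ) := by
      have h5 := (h1.trans h2).trans_eq h3
      have h6 : ((n:ℚ) - m + 1) * (((n:ℚ) - 2*m - 1) * T)
          ≤ ((n:ℚ) - m + 1) * (((m:ℚ) + 1) * (n.choose (m+1) : ℚ)) := by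
        nlinarith [h5]
      exact le_of_mul_le_mul_left h6 hpos
    push_cast
    nlinarith [h4, hC']

/-- Iterated ratio bound: `(2m+1)^t C(k+2m, m) ≤ k^t C(k+2m, m+t)`. -/
lemma aux_pow_choose (k m : ℕ) : ∀ t : ℕ, m + t ≤ k →
    (2*m+1)^t * (k+2*m).choose m ≤ k^t * (k+2*m).choose (m+t) := by
  intro t
  induction t with
  | zero => intro _; simp
  | succ t ih =>
    intro h
    have IH := ih (by omega)
    have hstep : (2*m+1) * (k+2*m).choose (m+t) ≤ k * (k+2*m).choose (m+t+1) := by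
      have hid := Nat.choose_succ_right_eq (k+2*m) (m+t)
      have h1 : (2*m+1) * (k+2*m).choose (m+t) ≤ (k+2*m - (m+t)) * (k+2*m).choose (m+t) :=
        Nat.mul_le_mul_right _ (by omega)
      have h2 : (k+2*m - (m+t)) * (k+2*m).choose (m+t) = (m+t+1) * (k+2*m).choose (m+t+1) := by
        rw [Nat.mul_comm, ← hid, Nat.mul_comm]
      have h3 : (m+t+1) * (k+2*m).choose (m+t+1) ≤ k * (k+2*m).choose (m+t+1) :=
        Nat.mul_le_mul_right _ (by omega)
      calc (2*m+1) * (k+2*m).choose (m+t) ≤ (k+2*m - (m+t)) * (k+2*m).choose (m+t) := h1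
        _ = (m+t+1) * (k+2*m).choose (m+t+1) := h2
        _ ≤ k * (k+2*m).choose (m+t+1) := h3
    calc (2*m+1)^(t+1) * (k+2*m).choose m
        = (2*m+1) * ((2*m+1)^t * (k+2*m).choose m) := by ring
      _ ≤ (2*m+1) * (k^t * (k+2*m).choose (m+t)) := Nat.mul_le_mul_left _ IH
      _ = k^t * ((2*m+1) * (k+2*m).choose (m+t)) := by ring
      _ ≤ k^t * (k * (k+2*m).choose (m+t+1)) := Nat.mul_le_mul_left _ hstep
      _ = k^(t+1) * (k+2*m).choose (m+t+1) := by ring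

/-- Binomial coefficients increase up to the middle. -/
lemma aux_choose_mono (n i : ℕ) : ∀ j : ℕ, i ≤ j → j ≤ n / 2 → n.choose i ≤ n.choose j := by
  intro j
  induction j with
  | zero => intro h1 _; simp_all
  | succ j ihj =>
    intro h1 h2
    rcases Nat.lt_or_ge i (j+1) with hlt | hge
    · have hj : n.choose i ≤ n.choose j := ihj (by omega) (by omega)
      exact hj.trans (Nat.choose_le_succ_of_lt_half_left (by omega))
    · have : i = j + 1 := by omega
      simp [this]

/-- Second-order Bernoulli inequality, cleared of denominators, in ℕ. -/
lemma aux_bernoulli2 (k s : ℕ) : ∀ a : ℕ,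
    2*k^(a+3) + 2*(a+1)*s*k^(a+2) + (a+1)*a*s^2*k^(a+1) ≤ 2*(k+s)^(a+1)*k^2 := by
  intro a
  induction a with
  | zero => exact le_of_eq (by ring)
  | succ a ih =>
    have hid : 2*k^(a+1+3) + 2*(a+1+1)*s*k^(a+1+2) + (a+1+1)*(a+1)*s^2*k^(a+1+1)
        + (a+1)*a*s^3*k^(a+1)
        = (k+s) * (2*k^(a+3) + 2*(a+1)*s*k^(a+2) + (a+1)*a*s^2*k^(a+1)) := by ring
    calc 2*k^(a+1+3) + 2*(a+1+1)*s*k^(a+1+2) + (a+1+1)*(a+1)*s^2*k^(a+1+1)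
        ≤ (k+s) * (2*k^(a+3) + 2*(a+1)*s*k^(a+2) + (a+1)*a*s^2*k^(a+1)) := by omega
      _ ≤ (k+s) * (2*(k+s)^(a+1)*k^2) := Nat.mul_le_mul_left _ ih
      _ = 2*(k+s)^(a+1+1)*k^2 := by ring

/-- The key polynomial inequality, in ℕ. -/
lemma aux_keypoly (a b : ℕ) :
    (2*a+b+3)^2*(2*a+b+4)*(3*a+2*b+6) + 2*(2*a+b+3)^2*(a+b+2)*(3*a+2*b+6)
      + 2*(2*a+b+3)^2*(a+b+2)*(2*a+b+4)
    ≤ (2*a+b+4)*(3*a+2*b+6)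
        * (2*(2*a+b+3)^2 + 2*(a+1)*(b+2)*(2*a+b+3) + (a+1)*a*(b+2)^2) := by
  have h : (2*a+b+4)*(3*a+2*b+6)
        * (2*(2*a+b+3)^2 + 2*(a+1)*(b+2)*(2*a+b+3) + (a+1)*a*(b+2)^2)
      = (2*a+b+3)^2*(2*a+b+4)*(3*a+2*b+6) + 2*(2*a+b+3)^2*(a+b+2)*(3*a+2*b+6)
        + 2*(2*a+b+3)^2*(a+b+2)*(2*a+b+4)
        + (144 + 150*b + 52*b^2 + 6*b^3 + 528*a + 635*a*b + 300*a*b^2 + 67*a*b^3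
          + 6*a*b^4 + 644*a^2 + 752*a^2*b + 314*a^2*b^2 + 51*a^2*b^3 + 2*a^2*b^4
          + 320*a^3 + 332*a^3*b + 98*a^3*b^2 + 7*a^3*b^3 + 56*a^4 + 48*a^4*b + 6*a^4*b^2) := by
    ring
  rw [h]
  exact Nat.le_add_right _ _

set_option maxHeartbeats 1600000 in
open Finset in
theorem farkas_ineq_j_eq_two_even (k r n : ℕ) (hk : 3 ≤ k) (hr1 : 1 ≤ r) (hr2 : r ≤ k - 2)
    (hpar : r % 2 = k % 2) (hn : n = 2 * k + r) :
    (∑ i ∈ Icc 1 ((k + r) / 2 - 1), (Nat.choose n i : ℚ))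
      + (1 / 2 : ℚ) * (Nat.choose n ((k + r) / 2) : ℚ)
      + (Nat.choose n r : ℚ)
      < (Nat.choose n k : ℚ) := by
  set m := (k + r) / 2 with hmdef
  have hme : k + r = 2 * m := by omega
  have hm2 : 2 ≤ m := by omega
  have hmk : m + 1 ≤ k := by omega
  have hn' : n = k + 2 * m := by omega
  set a := k - m - 1 with hadef
  set b := r - 1 with hbdef
  have hka : k = 2*a + b + 3 := by omega
  have hma : m = a + b + 2 := by omega
  -- F1 : (k+1) * T ≤ (k+m+1) * (n.choose m:ℚ)  over ℚ
  have hF1 := aux_sum_choose_le n m (by omega)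
  have hnq : (n : ℚ) = (k : ℚ) + 2 * m := by exact_mod_cast congrArg (Nat.cast : ℕ → ℚ) hn'
  rw [hnq] at hF1
  have hF1' : ((k:ℚ) + 1) * ∑ i ∈ range (m + 1), (n.choose i : ℚ)
      ≤ ((k:ℚ) + m + 1) * (n.choose m : ℚ) := by
    have e1 : (k:ℚ) + 2*m - 2*m + 1 = (k:ℚ) + 1 := by ring
    have e2 : (k:ℚ) + 2*m - m + 1 = (k:ℚ) + m + 1 := by ring
    rw [e1, e2] at hF1
    exact hF1
  -- F2 : decomposition of the sum
  have hF2 : ∑ i ∈ range (m + 1), (n.choose i : ℚ)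
      = 1 + (∑ i ∈ Icc 1 (m-1), (n.choose i : ℚ)) + (n.choose m : ℚ) := by
    rw [Finset.sum_range_succ, Finset.range_eq_Ico,
      Finset.sum_eq_sum_Ico_succ_bot (by omega : 0 < m)]
    have hIco : Finset.Ico 1 m = Finset.Icc 1 (m-1) := by
      rw [← Finset.Ico_add_one_right_eq_Icc]; congr 1; omega
    rw [hIco]
    simp
  -- F3 : (k+m+1) * C(n,r) ≤ m * C(n,m) in ℕ
  have hF3 : (k+m+1) * n.choose r ≤ m * n.choose m := by
    have hid := Nat.choose_succ_right_eq n (m-1)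
    rw [show m - 1 + 1 = m by omega] at hid
    have hsub : n - (m-1) = k + m + 1 := by omega
    rw [hsub] at hid
    have hmono : n.choose r ≤ n.choose (m-1) :=
      aux_choose_mono n r (m-1) (by omega) (by omega)
    calc (k+m+1) * n.choose r ≤ (k+m+1) * n.choose (m-1) :=
          Nat.mul_le_mul_left _ hmono
      _ = n.choose (m-1) * (k+m+1) := Nat.mul_comm _ _
      _ = n.choose m * m := hid.symm
      _ = m * n.choose m := Nat.mul_comm _ _
  -- F4 : (2m+1)^(a+1) * C(n,m) ≤ k^(a+1) * C(n,k)
  have hF4 := aux_pow_choose k m (a+1) (by omega)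
  rw [show m + (a+1) = k by omega, show k + 2*m = n by omega] at hF4
  -- F5 : bernoulli with s = b+2, k+s = 2m+1
  have hF5 := aux_bernoulli2 k (b+2) a
  rw [show k + (b+2) = 2*m+1 by omega] at hF5
  -- combine F4, F5 : X * (n.choose m:ℚ) ≤ 2 k^2 (n.choose k:ℚ)
  set X : ℕ := 2*k^2 + 2*(a+1)*(b+2)*k + (a+1)*a*(b+2)^2 with hXdef
  have hF5' : X * k^(a+1) ≤ 2*(2*m+1)^(a+1)*k^2 := by
    calc X * k^(a+1) = 2*k^(a+3) + 2*(a+1)*(b+2)*k^(a+2) + (a+1)*a*(b+2)^2*k^(a+1) := by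
          rw [hXdef]; ring
      _ ≤ 2*(2*m+1)^(a+1)*k^2 := hF5
  have hF7 : X * n.choose m ≤ 2*k^2 * n.choose k := by
    have hc : X * n.choose m * k^(a+1) ≤ 2*k^2 * n.choose k * k^(a+1) := by
      calc X * n.choose m * k^(a+1) = (X * k^(a+1)) * n.choose m := by ring
        _ ≤ (2*(2*m+1)^(a+1)*k^2) * n.choose m := Nat.mul_le_mul_right _ hF5'
        _ = 2*k^2 * ((2*m+1)^(a+1) * n.choose m) := by ring
        _ ≤ 2*k^2 * (k^(a+1) * n.choose k) := Nat.mul_le_mul_left _ hF4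
        _ = 2*k^2 * n.choose k * k^(a+1) := by ring
    exact Nat.le_of_mul_le_mul_right hc (by positivity)
  -- F6 : key polynomial inequality rewritten
  have hF6 := aux_keypoly a b
  rw [show 2*a+b+3 = k by omega, show 2*a+b+4 = k+1 by omega,
    show 3*a+2*b+6 = k+m+1 by omega, show a+b+2 = m by omega, ← hXdef] at hF6
  -- cast everything to ℚ
  have h1 : ((k:ℚ) + 1) * (∑ i ∈ Icc 1 (m-1), (n.choose i : ℚ)) < (m:ℚ) * (n.choose m:ℚ) := by
    rw [hF2] at hF1'
    have : ((k:ℚ)+1) * (1 + (∑ i ∈ Icc 1 (m-1), (n.choose i : ℚ)) + (n.choose m:ℚ)) ≤ ((k:ℚ) + (m:ℚ) + 1) * (n.choose m:ℚ) := hF1'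
    have hKpos' : (0:ℚ) < (k:ℚ) := by exact_mod_cast (by omega : 0 < k)
    nlinarith [this, hKpos']
  have h2 : ((k:ℚ) + (m:ℚ) + 1) * (n.choose r:ℚ) ≤ (m:ℚ) * (n.choose m:ℚ) := by exact_mod_cast hF3
  have h6 : (k:ℚ)^2*((k:ℚ)+1)*((k:ℚ)+(m:ℚ)+1) + 2*(k:ℚ)^2*(m:ℚ)*((k:ℚ)+(m:ℚ)+1) + 2*(k:ℚ)^2*(m:ℚ)*((k:ℚ)+1)
      ≤ ((k:ℚ)+1)*((k:ℚ)+(m:ℚ)+1)*(X:ℚ) := by exact_mod_cast hF6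
  have h7 : (X:ℚ) * (n.choose m:ℚ) ≤ 2*(k:ℚ)^2 * (n.choose k:ℚ) := by exact_mod_cast hF7
  have hCmnn : (0:ℚ) ≤ (n.choose m:ℚ) := by positivity
  have hCrnn : (0:ℚ) ≤ (n.choose r:ℚ) := by positivity
  have hKpos : (0:ℚ) < (k:ℚ) := by exact_mod_cast (by omega : 0 < k)
  have hMpos : (0:ℚ) < (m:ℚ) := by exact_mod_cast (by omega : 0 < m)
  have hEpos : (0:ℚ) < 2*(k:ℚ)^2*((k:ℚ)+1)*((k:ℚ)+(m:ℚ)+1) := by positivity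
  have t1 : 2*(k:ℚ)^2*((k:ℚ)+(m:ℚ)+1)*(((k:ℚ)+1)*(∑ i ∈ Icc 1 (m-1), (n.choose i : ℚ))) < 2*(k:ℚ)^2*((k:ℚ)+(m:ℚ)+1)*((m:ℚ)*(n.choose m:ℚ)) :=
    mul_lt_mul_of_pos_left h1 (by positivity)
  have t2 : 2*(k:ℚ)^2*((k:ℚ)+1)*(((k:ℚ)+(m:ℚ)+1)*(n.choose r:ℚ)) ≤ 2*(k:ℚ)^2*((k:ℚ)+1)*((m:ℚ)*(n.choose m:ℚ)) :=
    mul_le_mul_of_nonneg_left h2 (by positivity)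
  have t3 : ((k:ℚ)^2*((k:ℚ)+1)*((k:ℚ)+(m:ℚ)+1) + 2*(k:ℚ)^2*(m:ℚ)*((k:ℚ)+(m:ℚ)+1) + 2*(k:ℚ)^2*(m:ℚ)*((k:ℚ)+1)) * (n.choose m:ℚ)
      ≤ (((k:ℚ)+1)*((k:ℚ)+(m:ℚ)+1)*(X:ℚ)) * (n.choose m:ℚ) := mul_le_mul_of_nonneg_right h6 hCmnn
  have t4 : ((k:ℚ)+1)*((k:ℚ)+(m:ℚ)+1)*((X:ℚ)*(n.choose m:ℚ)) ≤ ((k:ℚ)+1)*((k:ℚ)+(m:ℚ)+1)*(2*(k:ℚ)^2*(n.choose k:ℚ)) :=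
    mul_le_mul_of_nonneg_left h7 (by positivity)
  have hbig : 2*(k:ℚ)^2*((k:ℚ)+1)*((k:ℚ)+(m:ℚ)+1) * ((∑ i ∈ Icc 1 (m-1), (n.choose i : ℚ)) + (1/2)*(n.choose m:ℚ) + (n.choose r:ℚ))
      < 2*(k:ℚ)^2*((k:ℚ)+1)*((k:ℚ)+(m:ℚ)+1) * (n.choose k:ℚ) := by linarith [t1, t2, t3, t4]
  have hfin : (∑ i ∈ Icc 1 (m-1), (n.choose i : ℚ)) + (1/2)*(n.choose m:ℚ) + (n.choose r:ℚ) < (n.choose k:ℚ) := lt_of_mul_lt_mul_left hbig hEpos.le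
  linarith [hfin]
end

section
/- Let k ≥ 4 and r be integers with 1 ≤ r ≤ k−3, r ≢ k (mod 2), and n = 2k + r. Then C(n,r) + ∑_{i=1}^{(k+r−1)/2} C(n,i) < C(n,k). -/
open Finset in
lemma farkas_choose_mono (n a b : ℕ) (hab : a ≤ b) (hb : b ≤ n / 2) :
    Nat.choose n a ≤ Nat.choose n b := by
  induction b, hab using Nat.le_induction with
  | base => exact le_rfl
  | succ b hb' ih =>
    exact le_trans (ih (by omega)) (Nat.choose_le_succ_of_lt_half_left (by omega))

open Finset in
lemma farkas_geo_sum (a : ℕ → ℕ) (m : ℕ) (hm : 1 ≤ m)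
    (hd : ∀ i, 1 ≤ i → i < m → 2 * a i ≤ a (i + 1)) :
    (∑ i ∈ Icc 1 m, a i) + a 1 ≤ 2 * a m := by
  induction m, hm using Nat.le_induction with
  | base => simp [two_mul]
  | succ m hm' ih =>
    rw [show m + 1 = m + 1 from rfl, Finset.sum_Icc_succ_top (by omega)]
    have h1 := ih (fun i h1 h2 => hd i h1 (by omega))
    have h2 := hd m (by omega) (by omega)
    omega

open Finset in
theorem farkas_ineq_j_eq_two_odd (k r n : ℕ) (hk : 4 ≤ k) (hr1 : 1 ≤ r) (hr2 : r ≤ k - 3)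
    (hpar : r % 2 ≠ k % 2) (hn : n = 2 * k + r) :
    (Nat.choose n r : ℚ) + ∑ i ∈ Icc 1 ((k + r - 1) / 2), (Nat.choose n i : ℚ)
      < (Nat.choose n k : ℚ) := by
  set m := (k + r - 1) / 2 with hm
  have h2m : 2 * m = k + r - 1 := by omega
  -- doubling property
  have hd : ∀ i, 1 ≤ i → i < m → 2 * Nat.choose n i ≤ Nat.choose n (i + 1) := by
    intro i h1 h2
    have e := Nat.choose_succ_right_eq n i
    have hni : 2 * (i + 1) ≤ n - i := by omega
    have : Nat.choose n i * (2 * (i + 1)) ≤ Nat.choose n i * (n - i) :=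
      Nat.mul_le_mul_left _ hni
    rw [← e] at this
    have hpos : 0 < i + 1 := by omega
    refine Nat.le_of_mul_le_mul_right ?_ hpos
    calc (2 * Nat.choose n i) * (i + 1) = Nat.choose n i * (2 * (i + 1)) := by ring
      _ ≤ Nat.choose n (i + 1) * (i + 1) := this
  have hgeo := farkas_geo_sum (Nat.choose n) m (by omega) hd
  have hc1 : Nat.choose n 1 = n := Nat.choose_one_right n
  -- C(n, r) ≤ C(n, m)
  have hrm : Nat.choose n r ≤ Nat.choose n m :=
    farkas_choose_mono n r m (by omega) (by omega)
  -- 3 * C(n, m) ≤ C(n, m+2)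
  have e1 := Nat.choose_succ_right_eq n m
  have e2 := Nat.choose_succ_right_eq n (m + 1)
  have hA : n - m = (3 * k + r + 1) / 2 := by omega
  have hB : n - (m + 1) = (3 * k + r + 1) / 2 - 1 := by omega
  have hkey : 3 * ((m + 1) * (m + 2)) ≤ (n - m) * (n - (m + 1)) := by
    have h2A : 2 * (n - m) = 3 * k + r + 1 := by omega
    have h2B : 2 * (n - (m + 1)) + 1 = 3 * k + r := by omega
    have h2m' : 2 * m + 1 = k + r := by omega
    have hk3 : r + 3 ≤ k := by omega
    zify at h2A h2B h2m' hk3 hk ⊢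
    have hfac : (0:ℤ) ≤ ((k:ℤ) - r - 3) * ((k:ℤ) - 2) := by
      apply mul_nonneg <;> linarith
    nlinarith [hfac, hk3, hk, h2m', h2A, h2B]
  have h3 : 3 * Nat.choose n m ≤ Nat.choose n (m + 2) := by
    have hmul : Nat.choose n (m + 2) * ((m + 2) * (m + 1))
        = Nat.choose n m * ((n - m) * (n - (m + 1))) := by
      calc Nat.choose n (m + 2) * ((m + 2) * (m + 1))
          = (Nat.choose n (m + 1 + 1) * (m + 1 + 1)) * (m + 1) := by ring
        _ = (Nat.choose n (m + 1) * (n - (m + 1))) * (m + 1) := by rw [e2]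
        _ = (Nat.choose n (m + 1) * (m + 1)) * (n - (m + 1)) := by ring
        _ = (Nat.choose n m * (n - m)) * (n - (m + 1)) := by rw [e1]
        _ = Nat.choose n m * ((n - m) * (n - (m + 1))) := by ring
    have hge : Nat.choose n m * (3 * ((m + 1) * (m + 2)))
        ≤ Nat.choose n m * ((n - m) * (n - (m + 1))) :=
      Nat.mul_le_mul_left _ hkey
    rw [← hmul] at hge
    have hpos : 0 < (m + 2) * (m + 1) := by positivity
    refine Nat.le_of_mul_le_mul_right ?_ hpos
    calc (3 * Nat.choose n m) * ((m + 2) * (m + 1))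
        = Nat.choose n m * (3 * ((m + 1) * (m + 2))) := by ring
      _ ≤ Nat.choose n (m + 2) * ((m + 2) * (m + 1)) := hge
  -- C(n, m+2) ≤ C(n, k)
  have h4 : Nat.choose n (m + 2) ≤ Nat.choose n k :=
    farkas_choose_mono n (m + 2) k (by omega) (by omega)
  -- combine in ℕ
  have hn0 : 0 < n := by omega
  have hfinal : Nat.choose n r + (∑ i ∈ Icc 1 m, Nat.choose n i) < Nat.choose n k := by
    omega
  calc (Nat.choose n r : ℚ) + ∑ i ∈ Icc 1 m, (Nat.choose n i : ℚ)
      = ((Nat.choose n r + ∑ i ∈ Icc 1 m, Nat.choose n i : ℕ) : ℚ) := by push_cast; ring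
    _ < ((Nat.choose n k : ℕ) : ℚ) := by exact_mod_cast hfinal
end

section
/- Let k ≥ 2, j, r be integers with n = j·k + r and 0 < r < k − 1, and suppose j ≥ 3. Define y ∈ Q^k by y_i = j/2 for 1 ≤ i ≤ r−1, y_r = j, y_i = (j−1)/2 for r+1 ≤ i ≤ k−1, and y_k = −1. Then for every vector λ = (λ_1, …, λ_k) of non-negative integers satisfying ∑_{i=1}^k i·λ_i = n, we have ∑_{i=1}^k λ_i·y_i ≥ 0. -/
open Finset in
theorem farkas_feasibility (k j r n : ℕ) (hk : 2 ≤ k) (hr1 : 0 < r) (hr2 : r < k - 1)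
    (hj : 3 ≤ j) (hn : n = j * k + r) (l : ℕ → ℕ)
    (hsum : ∑ i ∈ Icc 1 k, i * l i = n) :
    0 ≤ ∑ i ∈ Icc 1 k, (l i : ℚ) *
      (if i = k then -1 else if i = r then (j : ℚ)
        else if i < r then (j : ℚ) / 2 else ((j : ℚ) - 1) / 2) := by
  set y : ℕ → ℚ := fun i => if i = k then -1 else if i = r then (j : ℚ)
      else if i < r then (j : ℚ) / 2 else ((j : ℚ) - 1) / 2 with hy
  have hkk : k - 1 + 1 = k := by omega
  have hsplit : ∑ i ∈ Icc 1 k, (l i : ℚ) * y i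
      = (∑ i ∈ Icc 1 (k-1), (l i : ℚ) * y i) + (l k : ℚ) * y k := by
    rw [← hkk, Finset.sum_Icc_succ_top (by omega)]
    simp
  have hsplitN : ∑ i ∈ Icc 1 k, i * l i = (∑ i ∈ Icc 1 (k-1), i * l i) + k * (l k) := by
    rw [← hkk, Finset.sum_Icc_succ_top (by omega)]
    simp
  set m := l k with hm
  set w := ∑ i ∈ Icc 1 (k-1), i * l i with hw
  set S := ∑ i ∈ Icc 1 (k-1), l i with hS
  have hwm : w + k * m = j * k + r := by
    rw [← hsplitN, hsum, hn]
  have hmj : m ≤ j := by nlinarith [hwm]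
  have hyk : y k = -1 := by simp [hy]
  have hylow : ∀ i ∈ Icc 1 (k-1), ((j:ℚ)-1)/2 ≤ y i := by
    intro i hi
    rw [mem_Icc] at hi
    have hik : i ≠ k := by omega
    have hjQ : (3:ℚ) ≤ (j:ℚ) := by exact_mod_cast hj
    simp only [hy]
    split_ifs with h1 h2 h3
    · exact absurd h1 hik
    · linarith
    · linarith
    · linarith
  have hynn : ∀ i ∈ Icc 1 (k-1), 0 ≤ y i := by
    intro i hi
    have := hylow i hi
    have : (3:ℚ) ≤ (j:ℚ) := by exact_mod_cast hj
    linarith [hylow i hi]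
  have hlnn : ∀ i : ℕ, (0:ℚ) ≤ (l i : ℚ) := fun i => Nat.cast_nonneg _
  -- cast facts
  have hjQ : (3:ℚ) ≤ (j:ℚ) := by exact_mod_cast hj
  have hwS : w ≤ (k-1) * S := by
    rw [hw, hS, Finset.mul_sum]
    apply Finset.sum_le_sum
    intro i hi
    rw [mem_Icc] at hi
    exact Nat.mul_le_mul_right _ hi.2
  -- main reduction
  rw [hsplit, hyk]
  suffices h : (m:ℚ) ≤ ∑ i ∈ Icc 1 (k-1), (l i : ℚ) * y i by
    linarith
  rcases lt_or_eq_of_le hmj with hmlt | hmeq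
  · -- m < j : use y i ≥ (j-1)/2 and S ≥ j - m + 1
    have hSge : j + 1 ≤ S + m := by
      by_contra h
      push_neg at h
      have h1 : S + m ≤ j := by omega
      have h2 : (k-1) * (S + m) ≤ (k-1) * j := Nat.mul_le_mul_left _ h1
      have h3 : w + (k-1) * m ≤ (k-1) * j := by
        calc w + (k-1)*m ≤ (k-1)*S + (k-1)*m := by omega
        _ = (k-1)*(S+m) := by ring
        _ ≤ (k-1)*j := h2
      -- w = j*k + r - k*m, so j*k + r - k*m + (k-1)*m ≤ (k-1)*j
      -- i.e. j*k + r - m ≤ j*k - j, i.e. j + r ≤ m ≤ j, contra r ≥ 1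
      have hk1 : 1 ≤ k := by omega
      nlinarith [hwm, h3, hr1, hmj, Nat.sub_add_cancel hk1]
    have hbound : ((j:ℚ)-1)/2 * S ≤ ∑ i ∈ Icc 1 (k-1), (l i : ℚ) * y i := by
      have : ∑ i ∈ Icc 1 (k-1), (l i : ℚ) * (((j:ℚ)-1)/2)
          ≤ ∑ i ∈ Icc 1 (k-1), (l i : ℚ) * y i := by
        apply Finset.sum_le_sum
        intro i hi
        exact mul_le_mul_of_nonneg_left (hylow i hi) (hlnn i)
      calc ((j:ℚ)-1)/2 * S = ∑ i ∈ Icc 1 (k-1), (l i : ℚ) * (((j:ℚ)-1)/2) := by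
            rw [hS]
            push_cast
            rw [Finset.mul_sum]
            apply Finset.sum_congr rfl
            intro i _
            ring
      _ ≤ _ := this
    have hSQ : (j:ℚ) + 1 - m ≤ (S:ℚ) := by
      have : ((j:ℚ) + 1) ≤ (S:ℚ) + m := by exact_mod_cast hSge
      linarith
    have hmQ : (m:ℚ) ≤ (j:ℚ) - 1 := by
      have : (m:ℚ) + 1 ≤ (j:ℚ) := by exact_mod_cast hmlt
      linarith
    nlinarith [hbound, hSQ, hmQ, hjQ]
  · -- m = j : remaining weight is exactly r
    have hwr : w = r := by
      have h := hwm
      rw [← hmeq] at h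
      have h2 : m * k = k * m := Nat.mul_comm _ _
      linarith
    have hle : ∀ i ∈ Icc 1 (k-1), l i ≠ 0 → i ≤ r := by
      intro i hi hne
      have h1 : i * l i ≤ w :=
        Finset.single_le_sum (f := fun i => i * l i) (fun _ _ => Nat.zero_le _) hi
      have h2 : i ≤ i * l i := Nat.le_mul_of_pos_right _ (Nat.pos_of_ne_zero hne)
      calc i ≤ i * l i := h2
      _ ≤ w := h1
      _ = r := hwr
    have hrmem : r ∈ Icc 1 (k-1) := mem_Icc.mpr ⟨hr1, by omega⟩
    have hyr : y r = j := by
      have : r ≠ k := by omega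
      simp [hy, this]
    by_cases hlr : l r = 0
    · -- all parts are < r, so at least 2 parts, each worth ≥ j/2
      have hr2' : 2 ≤ r := by
        by_contra h
        push_neg at h
        have hr1' : r = 1 := by omega
        have hzero : ∀ i ∈ Icc 1 (k-1), i * l i = 0 := by
          intro i hi
          by_cases hli : l i = 0
          · simp [hli]
          · have := hle i hi hli
            rw [mem_Icc] at hi
            have : i = 1 := by omega
            rw [this]
            have : l 1 = 0 := by rw [← hr1']; exact hlr
            simp [this]
        have : w = 0 := Finset.sum_eq_zero hzero
        omega
      have hws : w ≤ (r-1) * S := by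
        rw [hw, hS, Finset.mul_sum]
        apply Finset.sum_le_sum
        intro i hi
        by_cases hli : l i = 0
        · simp [hli]
        · have hir : i ≤ r := hle i hi hli
          have hiner : i ≠ r := by
            intro e
            rw [e] at hli
            exact hli hlr
          exact Nat.mul_le_mul_right _ (by omega)
      have hS2 : 2 ≤ S := by
        rcases Nat.lt_or_ge S 2 with h | h
        · exfalso
          have hS1 : S ≤ 1 := by omega
          have : (r-1) * S ≤ (r-1) * 1 := Nat.mul_le_mul_left _ hS1
          rw [Nat.mul_one] at this
          have : r ≤ r - 1 := by
            calc r = w := hwr.symm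
            _ ≤ (r-1) * S := hws
            _ ≤ r - 1 := this
          omega
        · exact h
      have hpt : ∀ i ∈ Icc 1 (k-1), (l i:ℚ) * ((j:ℚ)/2) ≤ (l i:ℚ) * y i := by
        intro i hi
        by_cases hli : l i = 0
        · simp [hli]
        · have hir : i ≤ r := hle i hi hli
          have hiner : i ≠ r := by
            intro e
            rw [e] at hli
            exact hli hlr
          have hik : i ≠ k := by
            rw [mem_Icc] at hi
            omega
          have : y i = (j:ℚ)/2 := by
            rw [hy]
            simp only [hik, if_false, hiner, if_false]
            rw [if_pos (by omega : i < r)]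
          rw [this]
      have hbound : (j:ℚ)/2 * S ≤ ∑ i ∈ Icc 1 (k-1), (l i : ℚ) * y i := by
        calc (j:ℚ)/2 * S = ∑ i ∈ Icc 1 (k-1), (l i : ℚ) * ((j:ℚ)/2) := by
              rw [hS]
              push_cast
              rw [Finset.mul_sum]
              apply Finset.sum_congr rfl
              intro i _
              ring
        _ ≤ _ := Finset.sum_le_sum hpt
      have hSQ : (2:ℚ) ≤ (S:ℚ) := by exact_mod_cast hS2
      rw [hmeq]
      have h0 : (0:ℚ) ≤ (j:ℚ)/2 := by linarith
      have hjj : (j:ℚ)/2 * 2 ≤ (j:ℚ)/2 * (S:ℚ) := mul_le_mul_of_nonneg_left hSQ h0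
      linarith [hbound]
    · -- l r ≥ 1 : single term contributes at least j
      have h1 : (l r : ℚ) * y r ≤ ∑ i ∈ Icc 1 (k-1), (l i : ℚ) * y i :=
        Finset.single_le_sum (fun i hi => mul_nonneg (hlnn i) (hynn i hi)) hrmem
      have h2 : (1:ℚ) ≤ (l r : ℚ) := by
        exact_mod_cast Nat.one_le_iff_ne_zero.mpr hlr
      rw [hyr] at h1
      rw [hmeq]
      have h0 : (0:ℚ) ≤ (j:ℚ) := by linarith
      have h3 : 1 * (j:ℚ) ≤ (l r : ℚ) * (j:ℚ) := mul_le_mul_of_nonneg_right h2 h0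
      linarith [h1]
end

section
/- Let k ≥ 9 be an odd integer, t an integer with 1 ≤ t ≤ ⌈k/2⌉ − 3, and n = t·k + k − 1. Then the Diophantine system n − (k−3) ≤ (k−2)·a + k·b ≤ n − (2t+2) has no solution in non-negative integers a, b. -/
theorem no_solution_diophantine (k t n : ℕ) (hk : 9 ≤ k) (hodd : Odd k)
    (ht1 : 1 ≤ t) (ht2 : t ≤ (k + 1) / 2 - 3) (hn : n = t * k + k - 1) :
    ¬ ∃ a b : ℕ, n - (k - 3) ≤ (k - 2) * a + k * b ∧ (k - 2) * a + k * b ≤ n - (2 * t + 2) := by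
  rintro ⟨a, b, h1, h2⟩
  obtain ⟨c, rfl⟩ : ∃ c, k = c + 9 := ⟨k - 9, by omega⟩
  subst hn
  obtain ⟨m, hm⟩ : ∃ m, t * (c + 9) = m := ⟨_, rfl⟩
  rw [hm] at h1 h2
  have hmt : 9 * t ≤ m := by
    calc 9 * t = t * 9 := by ring
    _ ≤ t * (c + 9) := Nat.mul_le_mul_left t (by omega)
    _ = m := hm
  have e1 : m + (c + 9) - 1 - (c + 9 - 3) = m + 2 := by omega
  have e2 : m + (c + 9) - 1 - (2 * t + 2) = m + c + 6 - 2 * t := by omega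
  rw [e1] at h1
  rw [e2] at h2
  have e3 : c + 9 - 2 = c + 7 := by omega
  rw [e3] at h1 h2
  have h2' : (c + 7) * a + (c + 9) * b + 2 * t ≤ m + c + 6 := by omega
  clear h2 e1 e2 e3 ht2 hodd hk
  rcases le_or_gt (a + b) t with hab | hab
  · have key : (c + 9) * (a + b) ≤ (c + 9) * t := Nat.mul_le_mul_left _ hab
    nlinarith [key, hm, h1]
  · rcases le_or_gt a (t + 1) with ha | ha
    · have hb : t + 1 ≤ a + b := hab
      have key : (c + 9) * (t + 1) ≤ (c + 9) * (a + b) := Nat.mul_le_mul_left _ hb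
      nlinarith [key, hm, h2', ha]
    · have key : (c + 7) * (t + 2) ≤ (c + 7) * a := Nat.mul_le_mul_left _ (by omega)
      nlinarith [key, hm, h2']
end

section
/- Let k ≥ 2 and j ≥ k − 1 be integers and n = j·k. Then ∑_{i=1}^{k−1} ((n/k − i/gcd(k,i)) / (k/gcd(k,i))) · C(n,i) < C(n,k). -/
/-!
Writing `n = j k` and `g = gcd k i`, the `i`-th coefficient is `(j g - i) / k`. For `i < k` the
gcd is a proper divisor of `k`, so every coefficient is at most `j / 2`; the last one (`i = k - 1`,
`g = 1`) is exactly `(j - k + 1) / k`. Since `n ≥ k (k - 1)`, the binomial coefficients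
`C(n, i)` at least double at each step for `i ≤ k - 2`, so the first `k - 2` terms sum to less
than `2 C(n, k - 2)`. Expressing `C(n, k)` and `C(n, k - 1)` through `C(n, k - 2)` turns what is
left into the positivity of `j C(n, k - 2) (n - 2k + 2) + j k / 2`.
-/

open Finset

namespace Nat

theorem two_mul_choose_le_choose_succ {n m : ℕ} (h : 3 * m + 2 ≤ n) :
    2 * n.choose m ≤ n.choose (m + 1) := by
  refine Nat.le_of_mul_le_mul_right ?_ m.succ_pos
  calc 2 * n.choose m * (m + 1) = n.choose m * (2 * (m + 1)) := by ring
    _ ≤ n.choose m * (n - m) := Nat.mul_le_mul_left _ (by omega)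
    _ = n.choose (m + 1) * (m + 1) := (choose_succ_right_eq n m).symm

/-- The binomial coefficients at least double up to `m`, so their sum is dominated by a
geometric series. -/
theorem sum_Icc_choose_lt_two_mul_choose {n m : ℕ} (h : 3 * m ≤ n + 1) :
    ∑ i ∈ Icc 1 m, n.choose i < 2 * n.choose m := by
  induction m with
  | zero => simp
  | succ m ih =>
    rw [sum_Icc_succ_top (by omega)]
    have := two_mul_choose_le_choose_succ (n := n) (m := m) (by omega)
    have := ih (by omega)
    omega

theorem cast_choose_succ_mul {R : Type*} [CommRing R] {n m : ℕ} (h : m ≤ n) :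
    (n.choose (m + 1) : R) * (m + 1) = n.choose m * (n - m) := by
  have := congrArg (Nat.cast : ℕ → R) (choose_succ_right_eq n m)
  push_cast [h] at this
  exact this

theorem two_mul_gcd_le {k i : ℕ} (hi : 0 < i) (hik : i < k) : 2 * k.gcd i ≤ k := by
  by_contra! hlt
  have := eq_of_dvd_of_lt_two_mul (by omega) (gcd_dvd_left k i) hlt
  have := gcd_le_right (m := k) (n := i) hi
  omega

end Nat

def greedyCoeff (j k i : ℕ) : ℚ :=
  (j * k.gcd i - i) / k

theorem greedyCoeff_eq {j k : ℕ} (hk : k ≠ 0) (i : ℕ) :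
    (((j * k : ℕ) : ℚ) / k - i / k.gcd i) / (k / k.gcd i) = greedyCoeff j k i := by
  have : (k.gcd i : ℚ) ≠ 0 := by exact_mod_cast (Nat.gcd_pos_of_pos_left i (by omega)).ne'
  rw [greedyCoeff]
  push_cast
  field_simp

theorem greedyCoeff_le_half (j : ℕ) {k i : ℕ} (hi : 0 < i) (hik : i < k) :
    greedyCoeff j k i ≤ j / 2 := by
  have hg : 2 * (k.gcd i : ℚ) ≤ k := by exact_mod_cast Nat.two_mul_gcd_le hi hik
  rw [greedyCoeff, div_le_div_iff₀ (by exact_mod_cast hi.trans hik) (by norm_num)]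
  nlinarith [(j.cast_nonneg : (0 : ℚ) ≤ j), (i.cast_nonneg : (0 : ℚ) ≤ i)]

theorem greedyCoeff_succ_self (j m : ℕ) :
    greedyCoeff j (m + 1) m = (j - m) / (m + 1) := by
  simp [greedyCoeff]

theorem sum_Icc_greedyCoeff_mul_choose_le {j m : ℕ} (hj : m + 1 ≤ j) :
    ∑ i ∈ Icc 1 m, greedyCoeff j (m + 2) i * (j * (m + 2)).choose i ≤
      j * (j * (m + 2)).choose m - j / 2 := by
  have hcoeff : ∑ i ∈ Icc 1 m, greedyCoeff j (m + 2) i * (j * (m + 2)).choose i ≤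
      j / 2 * ∑ i ∈ Icc 1 m, ((j * (m + 2)).choose i : ℚ) := by
    rw [mul_sum]
    refine sum_le_sum fun i hi ↦ mul_le_mul_of_nonneg_right ?_ (by positivity)
    obtain ⟨hi1, him⟩ := mem_Icc.1 hi
    exact greedyCoeff_le_half j hi1 (by omega)
  have hgeom :
      ∑ i ∈ Icc 1 m, ((j * (m + 2)).choose i : ℚ) + 1 ≤ 2 * (j * (m + 2)).choose m := by
    have : (m + 1) * (m + 2) ≤ j * (m + 2) := Nat.mul_le_mul_right _ hj
    exact_mod_cast Nat.sum_Icc_choose_lt_two_mul_choose (by nlinarith)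
  nlinarith [(j.cast_nonneg : (0 : ℚ) ≤ j)]

theorem mul_choose_add_greedyCoeff_mul_choose_lt {j m : ℕ} (hj : m + 1 ≤ j) :
    j * (j * (m + 2)).choose m - j / 2 +
        greedyCoeff j (m + 2) (m + 1) * (j * (m + 2)).choose (m + 1) <
      (j * (m + 2)).choose (m + 2) := by
  rw [greedyCoeff_succ_self]
  set n := j * (m + 2) with hn
  have hnm : (m + 1) * (m + 2) ≤ n := Nat.mul_le_mul_right _ hj
  have hC := Nat.cast_choose_succ_mul (R := ℚ) (n := n) (m := m + 1) (by nlinarith)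
  have hB := Nat.cast_choose_succ_mul (R := ℚ) (n := n) (m := m) (by nlinarith)
  have hA : (0 : ℚ) < n.choose m := by exact_mod_cast Nat.choose_pos (by nlinarith)
  have hj : (0 : ℚ) < j := by exact_mod_cast (show 0 < j by omega)
  have h2n : 2 * (m : ℚ) + 2 ≤ n := by exact_mod_cast (show 2 * m + 2 ≤ n by nlinarith)
  have hnq : (n : ℚ) = j * (m + 2) := by simp [hn]
  push_cast at hC hB ⊢
  rw [show (m : ℚ) + 1 + 1 = m + 2 by ring]
  set A := (n.choose m : ℚ)
  set B := (n.choose (m + 1) : ℚ)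
  set C := (n.choose (m + 2) : ℚ)
  have hrem : C - (j * A - j / 2 + (j - (m + 1)) / (m + 2) * B) =
      (j * A * (n - 2 * m - 2) + j * (m + 2) / 2) / (m + 2) := by
    field_simp
    linear_combination 2 * hC + 2 * j * hB + 2 * B * hnq
  have hgap : 0 ≤ (n : ℚ) - 2 * m - 2 := by linarith
  have hpos : 0 < C - (j * A - j / 2 + (j - (m + 1)) / (m + 2) * B) := by
    rw [hrem]
    positivity
  linarith

open Finset in
theorem greedy_remainder_nonneg (k j n : ℕ) (hk : 2 ≤ k) (hj : k - 1 ≤ j) (hn : n = j * k) :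
    ∑ i ∈ Icc 1 (k - 1),
        (((n : ℚ) / (k : ℚ) - (i : ℚ) / (Nat.gcd k i : ℚ)) / ((k : ℚ) / (Nat.gcd k i : ℚ)))
          * (Nat.choose n i : ℚ)
      < (Nat.choose n k : ℚ) := by
  obtain ⟨m, rfl⟩ : ∃ m, k = m + 2 := ⟨k - 2, by omega⟩
  subst hn
  simp only [greedyCoeff_eq (by omega : m + 2 ≠ 0)]
  rw [show m + 2 - 1 = m + 1 by omega, sum_Icc_succ_top (by omega)]
  exact (add_le_add_left (sum_Icc_greedyCoeff_mul_choose_le (by omega)) _).trans_lt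
    (mul_choose_add_greedyCoeff_mul_choose_lt (by omega))
end

section
/- Let k ≥ 7 be an odd integer and n = k² − 3k − 1. Then a := ((k−3)/2) / ((n)/3) · C(n, k−2), i.e., a = 3(k−3)·C(n,k−2) / (2n), is a non-negative integer, and b := (k−5)·C(n,k−2)/(2n) is a non-negative integer. -/
theorem type_multiplicities_integral (k n : ℕ) (hk : 7 ≤ k) (hodd : Odd k)
    (hn : n = k ^ 2 - 3 * k - 1) :
    (2 * n) ∣ 3 * (k - 3) * Nat.choose n (k - 2) ∧
    (2 * n) ∣ (k - 5) * Nat.choose n (k - 2) := by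
  obtain ⟨j, rfl⟩ : ∃ j, k = j + 7 := ⟨k - 7, by omega⟩
  obtain ⟨s, hs⟩ := hodd
  -- compute n
  have h1 : n = j * j + 11 * j + 27 := by
    rw [hn, Nat.sub_sub]
    apply Nat.sub_eq_of_eq_add
    ring
  set C := Nat.choose n (j + 7 - 2) with hC
  have hr : j + 7 - 2 = j + 5 := by omega
  rw [hr] at hC
  -- n divides (k-2) * C
  have hdvd : n ∣ (j + 5) * C := by
    refine ⟨(n - 1).choose (j + 4), ?_⟩
    have h := Nat.add_one_mul_choose_eq (n - 1) (j + 4)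
    simp only [Nat.succ_eq_add_one, show n - 1 + 1 = n by omega] at h
    rw [hC, show j + 5 = j + 4 + 1 from rfl]
    exact (mul_comm _ _).trans h.symm
  -- gcd(n, j+5) divides 3
  have hn3 : n + 3 = (j + 5) * (j + 6) := by rw [h1]; ring
  have hg : Nat.gcd n (j + 5) ∣ 3 := by
    have h2 : Nat.gcd n (j + 5) ∣ n + 3 := by
      rw [hn3]; exact (Nat.gcd_dvd_right _ _).mul_right _
    exact (Nat.dvd_add_right (Nat.gcd_dvd_left _ _)).mp h2
  have hg13 : Nat.gcd n (j + 5) = 1 ∨ Nat.gcd n (j + 5) = 3 :=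
    (Nat.Prime.eq_one_or_self_of_dvd Nat.prime_three _ hg)
  have h2k3 : 2 ∣ j + 7 - 3 := by omega
  have h2k5 : 2 ∣ j + 7 - 5 := by omega
  rcases hg13 with hg1 | hg3
  · -- n coprime to j+5, so n ∣ C
    have hcop : Nat.Coprime n (j + 5) := hg1
    have hnC : n ∣ C := hcop.dvd_of_dvd_mul_left hdvd
    constructor
    · have : 2 * n ∣ (j + 7 - 3) * C := mul_dvd_mul h2k3 hnC
      exact this.trans (Dvd.intro_left 3 (by ring))
    · exact mul_dvd_mul h2k5 hnC
  · -- gcd = 3 : write n = 3m, j+5 = 3t with gcd(m,t)=1, m ∣ C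
    obtain ⟨m, hm⟩ : 3 ∣ n := hg3 ▸ Nat.gcd_dvd_left _ _
    obtain ⟨t, ht⟩ : 3 ∣ j + 5 := hg3 ▸ Nat.gcd_dvd_right _ _
    have hmt : Nat.Coprime m t := by
      have : Nat.gcd (3 * m) (3 * t) = 3 := by rw [← hm, ← ht]; exact hg3
      rw [Nat.gcd_mul_left] at this
      have h3 : Nat.gcd m t = 1 := by omega
      exact h3
    have hmC : m ∣ C := by
      have : 3 * m ∣ 3 * t * C := by rw [← hm, ← ht]; exact hdvd
      have h4 : m ∣ t * C := by
        rcases this with ⟨u, hu⟩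
        refine ⟨u, Nat.eq_of_mul_eq_mul_left (show 0 < 3 by norm_num) ?_⟩
        calc 3 * (t * C) = 3 * t * C := by ring
          _ = 3 * m * u := hu
          _ = 3 * (m * u) := by ring
      exact hmt.dvd_of_dvd_mul_left h4
    constructor
    · have h5 : 2 * n ∣ (j + 7 - 3) * (3 * C) := by
        rw [hm]
        exact mul_dvd_mul h2k3 (mul_dvd_mul_left 3 hmC)
      exact h5.trans ⟨1, by ring⟩
    · have h6 : 6 ∣ j + 7 - 5 := by omega
      have : 2 * n ∣ (j + 7 - 5) * C := by
        rw [hm, show 2 * (3 * m) = 6 * m by ring]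
        exact mul_dvd_mul h6 hmC
      exact this
end

section
/- Let k be an odd integer with k ≥ 7, t an integer with 0 ≤ t ≤ (k−7)/2, and n = (k²−k−2)/2 + t·k. Set x = ∑_{i=(k+1)/2+t}^{k} ( ((k+1)/2 + t)·C(n−1, i−1) − C(n, i) ). Then x is a non-negative integer. -/
open Finset in
theorem x_nonneg_integer (k t n : ℕ) (hk : 7 ≤ k) (hodd : Odd k)
    (ht : t ≤ (k - 7) / 2) (hn : n = (k ^ 2 - k - 2) / 2 + t * k) :
    0 ≤ ∑ i ∈ Icc ((k + 1) / 2 + t) k,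
        ((((k + 1) / 2 + t : ℕ) : ℤ) * (Nat.choose (n - 1) (i - 1) : ℤ) - (Nat.choose n i : ℤ)) := by
  obtain ⟨s, hs⟩ := hodd
  set M := (k + 1) / 2 + t with hMdef
  have hs3 : 3 ≤ s := by omega
  have hM : M = s + 1 + t := by omega
  have hsq : k ^ 2 = 4 * (s * s) + 4 * s + 1 := by subst hs; ring
  have htk : t * k = 2 * (t * s) + t := by subst hs; ring
  have hn' : n = 2 * (s * s) + s - 1 + t * k := by omega
  have hMk : (M - 1) * k = 2 * (s * s) + 2 * (t * s) + s + t := by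
    have h1 : M - 1 = s + t := by omega
    rw [h1]; subst hs; ring
  have hss : 3 * s ≤ s * s := Nat.mul_le_mul_right s hs3
  have hkey : n + 1 = (M - 1) * k := by omega
  have hM4 : 4 ≤ M := by omega
  have hMk2 : (M - 1) * k = (M - 2) * k + k := by
    have h1 : M - 1 = (M - 2) + 1 := by omega
    rw [h1]; ring
  have hnk : k ≤ n := by omega
  have hMle : M ≤ k - 3 := by omega
  set a : ℕ → ℤ := fun j => ((n - 1).choose j : ℤ) with ha
  have ha0 : ∀ j, 0 ≤ a j := fun j => Int.natCast_nonneg _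
  have hstep : ∀ i ∈ Icc M k,
      ((M : ℤ) * ((n - 1).choose (i - 1) : ℤ) - (n.choose i : ℤ))
        = ((M : ℤ) - 1) * a (i - 1) - a i := by
    intro i hi
    simp only [mem_Icc] at hi
    have hi1 : 1 ≤ i := by omega
    have hpas : n.choose i = (n - 1).choose (i - 1) + (n - 1).choose i := by
      obtain ⟨n', rfl⟩ : ∃ n', n = n' + 1 := ⟨n - 1, by omega⟩
      obtain ⟨i', rfl⟩ : ∃ i', i = i' + 1 := ⟨i - 1, by omega⟩
      simp [Nat.choose_succ_succ]
    rw [hpas]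
    push_cast
    simp only [ha]
    ring
  rw [Finset.sum_congr rfl hstep, Finset.sum_sub_distrib]
  have hre : ∑ i ∈ Icc M k, ((M : ℤ) - 1) * a (i - 1)
      = ∑ j ∈ Icc (M - 1) (k - 1), ((M : ℤ) - 1) * a j := by
    rw [show Icc M k = Finset.map (addRightEmbedding 1) (Icc (M - 1) (k - 1)) by
      rw [Finset.map_add_right_Icc]; congr 1 <;> omega]
    rw [Finset.sum_map]
    simp
  have hsplitA : Icc (M - 1) (k - 1) = insert (M - 1) (Icc M (k - 1)) := by
    ext x; simp only [mem_Icc, mem_insert]; omega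
  have hsplitB : Icc M k = insert k (Icc M (k - 1)) := by
    ext x; simp only [mem_Icc, mem_insert]; omega
  have hnotA : (M - 1) ∉ Icc M (k - 1) := by simp only [mem_Icc]; omega
  have hnotB : k ∉ Icc M (k - 1) := by simp only [mem_Icc]; omega
  rw [hre, hsplitA, hsplitB, Finset.sum_insert hnotA, Finset.sum_insert hnotB,
    ← Finset.mul_sum]
  set C : ℤ := ∑ j ∈ Icc M (k - 1), a j with hC
  have hCk : a (k - 1) ≤ C :=
    Finset.single_le_sum (fun j _ => ha0 j) (by simp only [mem_Icc]; omega)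
  have hak : a k ≤ ((M : ℤ) - 2) * a (k - 1) := by
    have hid : (n - 1).choose k * k = (n - 1).choose (k - 1) * (n - k) := by
      have h := Nat.choose_succ_right_eq (n - 1) (k - 1)
      have h1 : k - 1 + 1 = k := by omega
      have h2 : n - 1 - (k - 1) = n - k := by omega
      rw [h1, h2] at h
      exact h
    have hle : n - k ≤ (M - 2) * k := by omega
    have hmul : (n - 1).choose k * k ≤ ((n - 1).choose (k - 1) * (M - 2)) * k := by
      calc (n - 1).choose k * k = (n - 1).choose (k - 1) * (n - k) := hid
        _ ≤ (n - 1).choose (k - 1) * ((M - 2) * k) := Nat.mul_le_mul_left _ hle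
        _ = ((n - 1).choose (k - 1) * (M - 2)) * k := by ring
    have h3 : (n - 1).choose k ≤ (n - 1).choose (k - 1) * (M - 2) :=
      Nat.le_of_mul_le_mul_right hmul (by omega)
    have h4 : ((n - 1).choose k : ℤ) ≤ (((n - 1).choose (k - 1) * (M - 2) : ℕ) : ℤ) :=
      Nat.cast_le.mpr h3
    rw [Nat.cast_mul, Nat.cast_sub (by omega : 2 ≤ M)] at h4
    push_cast at h4; simp only [ha]; linarith
  have hMz : (4 : ℤ) ≤ (M : ℤ) := by exact_mod_cast hM4
  have h5 : ((M : ℤ) - 2) * a (k - 1) ≤ ((M : ℤ) - 2) * C :=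
    mul_le_mul_of_nonneg_left hCk (by linarith)
  have h6 : 0 ≤ ((M : ℤ) - 1) * a (M - 1) := mul_nonneg (by linarith) (ha0 _)
  linarith [ha0 k]
end

section
/- Let n ≥ 1 and let F be a family consisting of all subsets of [n+1] of even size between 2 and k, where k is even, k ≤ n+1, and k divides n+1. If F can be partitioned into perfect partitions of [n+1] (1-factors), then the family of all non-empty subsets of [n] of size at most k can also be partitioned into 1-factors. -/
open Finset

/-- `M` is a 1-factor of the family of subsets of the ground set `V`:
its members are pairwise disjoint nonempty subsets of `V` whose union is `V`. -/
def IsOneFactor (V : Finset ℕ) (M : Finset (Finset ℕ)) : Prop :=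
  (∀ S ∈ M, S.Nonempty) ∧ (∀ S ∈ M, S ⊆ V) ∧
  (∀ S ∈ M, ∀ T ∈ M, S ≠ T → Disjoint S T) ∧ M.biUnion id = V

/-- The family `F` of subsets of the ground set `V` is 1-factorable:
`F` can be partitioned into 1-factors of `V`. -/
def OneFactorable (V : Finset ℕ) (F : Finset (Finset ℕ)) : Prop :=
  ∃ P : Finset (Finset (Finset ℕ)),
    (∀ M ∈ P, M ⊆ F ∧ IsOneFactor V M) ∧ ∀ S ∈ F, ∃! M, M ∈ P ∧ S ∈ M

/-!
Deleting the point `n + 1` from every block of a 1-factor of `[n + 1]` gives a 1-factor of `[n]`.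
On sets of even size this deletion is injective, since the parity of `T.erase (n + 1)` records
whether `n + 1 ∈ T`. Every set of size `1, …, k` in `[n]` arises from a set of even size
`2, …, k` in `[n + 1]`: add `n + 1` exactly when its size is odd, which keeps the size `≤ k`
because `k` is even.
-/

theorem IsOneFactor.image_erase {V : Finset ℕ} {M : Finset (Finset ℕ)} {a : ℕ} (ha : a ∉ V)
    (hM : IsOneFactor (insert a V) M) (hne : ∀ T ∈ M, (T.erase a).Nonempty) :
    IsOneFactor V (M.image (·.erase a)) := by
  obtain ⟨-, hsub, hdisj, hcover⟩ := hM
  refine ⟨?_, ?_, ?_, ?_⟩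
  · simpa using hne
  · simp only [mem_image, forall_exists_index, and_imp, forall_apply_eq_imp_iff₂]
    intro T hT
    rw [← erase_insert ha]
    exact erase_subset_erase a (hsub T hT)
  · simp only [mem_image, forall_exists_index, and_imp, forall_apply_eq_imp_iff₂]
    intro S hS T hT hST
    exact (hdisj S hS T hT (ne_of_apply_ne (·.erase a) hST)).mono
      (erase_subset a S) (erase_subset a T)
  · rw [← erase_insert ha, ← hcover]
    ext x
    simp only [mem_biUnion, mem_image, id, exists_exists_and_eq_and, mem_erase]
    exact ⟨fun ⟨T, hT, hxa, hxT⟩ => ⟨hxa, T, hT, hxT⟩, fun ⟨hxa, T, hT, hxT⟩ => ⟨T, hT, hxa, hxT⟩⟩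

theorem Finset.mem_iff_odd_card_erase {T : Finset ℕ} (a : ℕ) (hT : Even T.card) :
    a ∈ T ↔ Odd (T.erase a).card := by
  by_cases haT : a ∈ T
  · have := card_pos.mpr ⟨a, haT⟩
    simpa [haT, card_erase_of_mem haT] using Nat.Even.sub_odd this hT odd_one
  · simpa [haT, erase_eq_of_notMem haT] using hT

theorem Finset.erase_injOn_even_card (a : ℕ) :
    Set.InjOn (·.erase a) {T : Finset ℕ | Even T.card} := by
  intro T hT U hU hTU
  have haTU : a ∈ T ↔ a ∈ U := by
    rw [mem_iff_odd_card_erase a hT, mem_iff_odd_card_erase a hU]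
    exact iff_of_eq (congrArg (Odd ·.card) hTU)
  ext x
  by_cases hxa : x = a
  · exact hxa ▸ haTU
  · simpa [hxa] using congrArg (x ∈ ·) hTU

theorem OneFactorable.image_erase {V : Finset ℕ} {F : Finset (Finset ℕ)} {a : ℕ} (ha : a ∉ V)
    (hF : OneFactorable (insert a V) F) (hinj : Set.InjOn (·.erase a) (F : Set (Finset ℕ)))
    (hne : ∀ T ∈ F, (T.erase a).Nonempty) :
    OneFactorable V (F.image (·.erase a)) := by
  obtain ⟨P, hPF, hPunique⟩ := hF
  refine ⟨P.image (·.image (·.erase a)), ?_, ?_⟩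
  · simp only [mem_image, forall_exists_index, and_imp, forall_apply_eq_imp_iff₂]
    intro M hM
    exact ⟨image_subset_image (hPF M hM).1,
      (hPF M hM).2.image_erase ha fun T hT => hne T ((hPF M hM).1 hT)⟩
  · simp only [mem_image, forall_exists_index, and_imp, forall_apply_eq_imp_iff₂]
    intro T hT
    obtain ⟨M, ⟨hMP, hTM⟩, hMunique⟩ := hPunique T hT
    refine ⟨M.image (·.erase a), ⟨⟨M, hMP, rfl⟩, mem_image_of_mem _ hTM⟩, ?_⟩
    rintro _ ⟨⟨M', hM'P, rfl⟩, hTM'⟩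
    obtain ⟨T', hT'M', hT'T⟩ := mem_image.mp hTM'
    obtain rfl : T' = T := hinj ((hPF M' hM'P).1 hT'M') hT hT'T
    rw [hMunique M' ⟨hM'P, hT'M'⟩]

theorem image_erase_evenLevels_eq_levels {V : Finset ℕ} {a k : ℕ} (ha : a ∉ V) (hk : Even k) :
    ((insert a V).powerset.filter (fun S => 2 ≤ S.card ∧ S.card ≤ k ∧ Even S.card)).image
        (·.erase a) =
      V.powerset.filter (fun S => 1 ≤ S.card ∧ S.card ≤ k) := by
  ext S
  simp only [mem_image, mem_filter, mem_powerset]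
  constructor
  · rintro ⟨T, ⟨hTV, h2T, hTk, -⟩, rfl⟩
    refine ⟨?_, ?_, (card_erase_le).trans hTk⟩
    · simpa [erase_insert ha] using erase_subset_erase a hTV
    · have := pred_card_le_card_erase (s := T) (a := a)
      omega
  · rintro ⟨hSV, h1S, hSk⟩
    have haS : a ∉ S := fun h => ha (hSV h)
    by_cases hS : Even S.card
    · refine ⟨S, ⟨hSV.trans (subset_insert a V), ?_, hSk, hS⟩, erase_eq_of_notMem haS⟩
      rcases hS with ⟨m, hm⟩
      omega
    · -- an odd size `≤ k` is `< k`, since `k` is even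
      have hSk' : S.card + 1 ≤ k := by
        rcases hk with ⟨m, hm⟩
        rcases Nat.not_even_iff_odd.mp hS with ⟨j, hj⟩
        omega
      refine ⟨insert a S, ⟨insert_subset_insert a hSV, ?_⟩, erase_insert haS⟩
      rw [card_insert_of_notMem haS]
      exact ⟨by omega, hSk', (Nat.not_even_iff_odd.mp hS).add_one⟩

theorem even_levels_factorization_reduction_general (n k : ℕ) (hk : Even k)
    (h : OneFactorable (Icc 1 (n + 1))
      (((Icc 1 (n + 1)).powerset).filter
        (fun S => 2 ≤ S.card ∧ S.card ≤ k ∧ Even S.card))) :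
    OneFactorable (Icc 1 n)
      (((Icc 1 n).powerset).filter (fun S => 1 ≤ S.card ∧ S.card ≤ k)) := by
  have ha : n + 1 ∉ Icc 1 n := by simp
  rw [← insert_Icc_right_eq_Icc_add_one (by omega)] at h
  rw [← image_erase_evenLevels_eq_levels ha hk]
  refine h.image_erase ha ((erase_injOn_even_card (n + 1)).mono fun T hT => ?_) fun T hT => ?_
  · exact (mem_filter.mp hT).2.2.2
  · exact (one_lt_card_iff_nontrivial.mp (mem_filter.mp hT).2.1).erase_nonempty

theorem even_levels_factorization_reduction (n k : ℕ) (hn : 1 ≤ n) (hk : Even k)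
    (hk1 : k ≤ n + 1) (hdvd : k ∣ (n + 1))
    (h : OneFactorable (Icc 1 (n + 1))
      (((Icc 1 (n + 1)).powerset).filter
        (fun S => 2 ≤ S.card ∧ S.card ≤ k ∧ Even S.card))) :
    OneFactorable (Icc 1 n)
      (((Icc 1 n).powerset).filter (fun S => 1 ≤ S.card ∧ S.card ≤ k)) :=
  even_levels_factorization_reduction_general n k hk h
end

section
/- For positive integers n, k with n/2 ≤ k ≤ n − 1: the family of all non-empty subsets of [n] of size at most k is 1-factorable if and only if the family of all non-empty subsets of [n] of size at most n − k − 1 is 1-factorable. -/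
open Finset

def Fam (n c : ℕ) : Finset (Finset ℕ) :=
  ((Icc 1 n).powerset).filter (fun S => 1 ≤ S.card ∧ S.card ≤ c)

lemma mem_Fam {n c : ℕ} {S : Finset ℕ} :
    S ∈ Fam n c ↔ S ⊆ Icc 1 n ∧ 1 ≤ S.card ∧ S.card ≤ c := by
  simp [Fam]

lemma pair_isOneFactor {V S : Finset ℕ} (hS : S ⊆ V) (h1 : S.Nonempty)
    (h2 : (V \ S).Nonempty) : IsOneFactor V {S, V \ S} := by
  refine ⟨?_, ?_, ?_, ?_⟩
  · intro T hT; rcases mem_insert.mp hT with rfl | hT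
    · exact h1
    · rw [mem_singleton.mp hT]; exact h2
  · intro T hT; rcases mem_insert.mp hT with rfl | hT
    · exact hS
    · rw [mem_singleton.mp hT]; exact sdiff_subset
  · intro A hA B hB hne
    rcases mem_insert.mp hA with rfl | hA <;> rcases mem_insert.mp hB with rfl | hB
    · exact absurd rfl hne
    · rw [mem_singleton.mp hB]; exact disjoint_sdiff
    · rw [mem_singleton.mp hA]; exact disjoint_sdiff.symm
    · exact absurd ((mem_singleton.mp hA).trans (mem_singleton.mp hB).symm) hne
  · simp only [biUnion_insert, singleton_biUnion, id]
    exact union_sdiff_of_subset hS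

lemma biUnion_erase_eq {V : Finset ℕ} {M : Finset (Finset ℕ)}
    (hM : IsOneFactor V M) {S : Finset ℕ} (hS : S ∈ M) :
    (M.erase S).biUnion id = V \ S := by
  obtain ⟨-, hsub, hdisj, hU⟩ := hM
  ext x
  simp only [mem_biUnion, mem_erase, id, mem_sdiff]
  constructor
  · rintro ⟨A, ⟨hAne, hA⟩, hxA⟩
    refine ⟨hsub A hA hxA, fun hxS => ?_⟩
    simpa using (hdisj A hA S hS hAne).le_bot (mem_inter.mpr ⟨hxA, hxS⟩)
  · rintro ⟨hxV, hxS⟩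
    rw [← hU] at hxV
    obtain ⟨A, hA, hxA⟩ := mem_biUnion.mp hxV
    exact ⟨A, ⟨fun h => hxS (h ▸ hxA), hA⟩, hxA⟩

lemma Fam_mono {n c c' : ℕ} (h : c ≤ c') : Fam n c ⊆ Fam n c' := by
  intro S hS
  rw [mem_Fam] at *
  exact ⟨hS.1, hS.2.1, hS.2.2.trans h⟩

lemma card_compl {n : ℕ} {S : Finset ℕ} (hS : S ⊆ Icc 1 n) :
    (Icc 1 n \ S).card = n - S.card := by
  rw [card_sdiff_of_subset hS, Nat.card_Icc]; omega

lemma compl_compl' {n : ℕ} {S : Finset ℕ} (hS : S ⊆ Icc 1 n) :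
    Icc 1 n \ (Icc 1 n \ S) = S :=
  Finset.sdiff_sdiff_eq_self hS

lemma compl_mem_Fam {n k : ℕ} (hkn : k < n) (hnk : n ≤ 2 * k) {S : Finset ℕ}
    (hS : S ∈ Fam n k) (hmid : n - k ≤ S.card) :
    Icc 1 n \ S ∈ Fam n k ∧ n - k ≤ (Icc 1 n \ S).card := by
  rw [mem_Fam] at hS ⊢
  obtain ⟨h1, h2, h3⟩ := hS
  rw [card_compl h1]
  exact ⟨⟨sdiff_subset, by omega, by omega⟩, by omega⟩

lemma backward (n k : ℕ) (hn : 0 < n) (hkn : k < n) (hnk : n ≤ 2 * k)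
    (h : OneFactorable (Icc 1 n) (Fam n (n - k - 1))) :
    OneFactorable (Icc 1 n) (Fam n k) := by
  classical
  obtain ⟨P, hP1, hP2⟩ := h
  let D := (Fam n k).filter (fun S => n - k ≤ S.card)
  have hDmem : ∀ {S : Finset ℕ}, S ∈ D ↔ S ∈ Fam n k ∧ n - k ≤ S.card := fun {S} => mem_filter
  refine ⟨P ∪ D.image (fun S => ({S, Icc 1 n \ S} : Finset (Finset ℕ))), ?_, ?_⟩
  · intro M hM
    rcases mem_union.mp hM with hM | hM
    · exact ⟨(hP1 M hM).1.trans (Fam_mono (by omega)), (hP1 M hM).2⟩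
    · obtain ⟨S, hS, rfl⟩ := mem_image.mp hM
      rw [hDmem] at hS
      obtain ⟨hSF, hSmid⟩ := hS
      obtain ⟨hcpl, hcplmid⟩ := compl_mem_Fam hkn hnk hSF hSmid
      rw [mem_Fam] at hSF
      constructor
      · intro T hT
        rcases mem_insert.mp hT with rfl | hT
        · exact mem_Fam.mpr hSF
        · rw [mem_singleton.mp hT]; exact hcpl
      · refine pair_isOneFactor hSF.1 (card_pos.mp (by omega)) (card_pos.mp ?_)
        rw [mem_Fam] at hcpl; omega
  · intro A hA
    have hA' := mem_Fam.mp hA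
    by_cases hsmall : A.card ≤ n - k - 1
    · obtain ⟨M, ⟨hMP, hAM⟩, huniq⟩ := hP2 A (mem_Fam.mpr ⟨hA'.1, hA'.2.1, hsmall⟩)
      refine ⟨M, ⟨mem_union_left _ hMP, hAM⟩, ?_⟩
      rintro M' ⟨hM', hAM'⟩
      rcases mem_union.mp hM' with hM' | hM'
      · exact huniq M' ⟨hM', hAM'⟩
      · exfalso
        obtain ⟨S, hS, rfl⟩ := mem_image.mp hM'
        rw [hDmem] at hS
        obtain ⟨hSF, hSmid⟩ := hS
        have hSF' := mem_Fam.mp hSF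
        rcases mem_insert.mp hAM' with rfl | hAM'
        · omega
        · rw [mem_singleton.mp hAM'] at hsmall
          rw [card_compl hSF'.1] at hsmall
          omega
    · have hAD : A ∈ D := hDmem.mpr ⟨hA, by omega⟩
      refine ⟨{A, Icc 1 n \ A}, ⟨mem_union_right _ (mem_image_of_mem _ hAD), mem_insert_self _ _⟩, ?_⟩
      rintro M' ⟨hM', hAM'⟩
      rcases mem_union.mp hM' with hM' | hM'
      · exfalso
        have := mem_Fam.mp (((hP1 M' hM').1) hAM')
        omega
      · obtain ⟨S, hS, rfl⟩ := mem_image.mp hM'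
        rw [hDmem] at hS
        have hSF' := mem_Fam.mp hS.1
        rcases mem_insert.mp hAM' with rfl | hAM'
        · rfl
        · rw [mem_singleton.mp hAM']
          rw [compl_compl' hSF'.1, pair_comm]

def Bad (n k : ℕ) (M : Finset (Finset ℕ)) : Prop :=
  ∃ S ∈ M, n - k ≤ S.card ∧ M ≠ {S, Icc 1 n \ S}

instance (n k : ℕ) : DecidablePred (Bad n k) := fun M => by
  unfold Bad; infer_instance

lemma forward_aux (n k : ℕ) (hn : 0 < n) (hkn : k < n) (hnk : n ≤ 2 * k) :
    ∀ (m : ℕ) (P : Finset (Finset (Finset ℕ))),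
      (∀ M ∈ P, M ⊆ Fam n k ∧ IsOneFactor (Icc 1 n) M) →
      (∀ S ∈ Fam n k, ∃! M, M ∈ P ∧ S ∈ M) →
      (P.filter (Bad n k)).card ≤ m →
      OneFactorable (Icc 1 n) (Fam n (n - k - 1)) := by
  intro m
  induction m with
  | zero =>
    intro P hP1 hP2 hbad
    have hnobad : ∀ M ∈ P, ¬ Bad n k M := by
      intro M hM hB
      have hmem : M ∈ P.filter (Bad n k) := mem_filter.mpr ⟨hM, hB⟩
      rw [Nat.le_zero, card_eq_zero] at hbad
      rw [hbad] at hmem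
      exact absurd hmem (notMem_empty M)
    refine ⟨P.filter (fun M => ∀ S ∈ M, S.card ≤ n - k - 1), ?_, ?_⟩
    · intro M hM
      obtain ⟨hMP, hMs⟩ := mem_filter.mp hM
      refine ⟨?_, (hP1 M hMP).2⟩
      intro A hA
      have h := mem_Fam.mp ((hP1 M hMP).1 hA)
      exact mem_Fam.mpr ⟨h.1, h.2.1, hMs A hA⟩
    · intro A hA
      have hA' := mem_Fam.mp hA
      obtain ⟨M, ⟨hMP, hAM⟩, huniq⟩ := hP2 A (Fam_mono (by omega) hA)
      have hMQ : M ∈ P.filter (fun M => ∀ S ∈ M, S.card ≤ n - k - 1) := by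
        rw [mem_filter]
        refine ⟨hMP, ?_⟩
        intro B hB
        by_contra hB'
        have hBF := mem_Fam.mp ((hP1 M hMP).1 hB)
        have hMeq : M = {B, Icc 1 n \ B} := by
          by_contra hne
          exact hnobad M hMP ⟨B, hB, by omega, hne⟩
        rw [hMeq] at hAM
        have hcc := card_compl hBF.1
        rcases mem_insert.mp hAM with rfl | h
        · omega
        · rw [mem_singleton.mp h] at hA'
          omega
      exact ⟨M, ⟨hMQ, hAM⟩, fun M' hM' => huniq M' ⟨(mem_filter.mp hM'.1).1, hM'.2⟩⟩
  | succ m ih =>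
    intro P hP1 hP2 hbad
    by_cases hc : (P.filter (Bad n k)).card ≤ m
    · exact ih P hP1 hP2 hc
    -- find a bad factor
    obtain ⟨M₀, hM₀f⟩ := card_pos.mp (show 0 < (P.filter (Bad n k)).card by omega)
    obtain ⟨hM₀P, S, hSM₀, hSmid, hMne⟩ :
        M₀ ∈ P ∧ ∃ S ∈ M₀, n - k ≤ S.card ∧ M₀ ≠ {S, Icc 1 n \ S} := by
      have := mem_filter.mp hM₀f; exact ⟨this.1, this.2⟩
    have hfact₀ := (hP1 M₀ hM₀P).2
    have hSF : S ∈ Fam n k := (hP1 M₀ hM₀P).1 hSM₀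
    obtain ⟨hSV, hS1, hSk⟩ := mem_Fam.mp hSF
    have hTcard : (Icc 1 n \ S).card = n - S.card := card_compl hSV
    have hTF : Icc 1 n \ S ∈ Fam n k := mem_Fam.mpr ⟨sdiff_subset, by omega, by omega⟩
    obtain ⟨MT, ⟨hMTP, hTMT⟩, huniqT⟩ := hP2 (Icc 1 n \ S) hTF
    have hfactT := (hP1 MT hMTP).2
    have hVT : Icc 1 n \ (Icc 1 n \ S) = S := compl_compl' hSV
    -- T ∉ M₀
    have hTM₀ : Icc 1 n \ S ∉ M₀ := by
      intro hTM₀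
      apply hMne
      apply Subset.antisymm
      · intro A hA
        rw [mem_insert, mem_singleton]
        by_contra h'
        push_neg at h'
        obtain ⟨hAS, hAT⟩ := h'
        obtain ⟨x, hx⟩ := hfact₀.1 A hA
        have hxV : x ∈ Icc 1 n := hfact₀.2.1 A hA hx
        by_cases hxS : x ∈ S
        · simpa using (hfact₀.2.2.1 A hA S hSM₀ hAS).le_bot (mem_inter.mpr ⟨hx, hxS⟩)
        · have hxT : x ∈ Icc 1 n \ S := mem_sdiff.mpr ⟨hxV, hxS⟩
          simpa using (hfact₀.2.2.1 A hA _ hTM₀ hAT).le_bot (mem_inter.mpr ⟨hx, hxT⟩)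
      · intro A hA
        rcases mem_insert.mp hA with rfl | hA
        · exact hSM₀
        · rw [mem_singleton.mp hA]; exact hTM₀
    have hMT0 : MT ≠ M₀ := fun h => hTM₀ (h ▸ hTMT)
    have hSMT : S ∉ MT := fun h => hMT0 ((hP2 S hSF).unique ⟨hMTP, h⟩ ⟨hM₀P, hSM₀⟩)
    -- the swapped factor N
    set N := (M₀.erase S) ∪ (MT.erase (Icc 1 n \ S)) with hN
    have hU₀ : (M₀.erase S).biUnion id = Icc 1 n \ S := biUnion_erase_eq hfact₀ hSM₀
    have hUT : (MT.erase (Icc 1 n \ S)).biUnion id = S := by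
      rw [biUnion_erase_eq hfactT hTMT, hVT]
    have hA_sub_T : ∀ A ∈ M₀.erase S, A ⊆ Icc 1 n \ S := by
      intro A hA
      rw [← hU₀]; exact subset_biUnion_of_mem id hA
    have hA_sub_S : ∀ A ∈ MT.erase (Icc 1 n \ S), A ⊆ S := by
      intro A hA
      rw [← hUT]; exact subset_biUnion_of_mem id hA
    have hNmem : ∀ {A : Finset ℕ}, A ∈ N ↔ (A ∈ M₀ ∧ A ≠ S) ∨ (A ∈ MT ∧ A ≠ Icc 1 n \ S) := by
      intro A
      rw [hN, mem_union, mem_erase, mem_erase]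
      tauto
    have hNfact : IsOneFactor (Icc 1 n) N := by
      refine ⟨?_, ?_, ?_, ?_⟩
      · intro A hA
        rcases hNmem.mp hA with ⟨h, -⟩ | ⟨h, -⟩
        · exact hfact₀.1 A h
        · exact hfactT.1 A h
      · intro A hA
        rcases hNmem.mp hA with ⟨h, -⟩ | ⟨h, -⟩
        · exact hfact₀.2.1 A h
        · exact hfactT.2.1 A h
      · intro A hA B hB hne
        rw [hN, mem_union] at hA hB
        rcases hA with hA | hA <;> rcases hB with hB | hB
        · exact hfact₀.2.2.1 A (mem_of_mem_erase hA) B (mem_of_mem_erase hB) hne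
        · exact (disjoint_sdiff.symm.mono (hA_sub_T A hA) (hA_sub_S B hB))
        · exact (disjoint_sdiff.symm.mono (hA_sub_T B hB) (hA_sub_S A hA)).symm
        · exact hfactT.2.2.1 A (mem_of_mem_erase hA) B (mem_of_mem_erase hB) hne
      · have key : N.biUnion id
            = (M₀.erase S).biUnion id ∪ (MT.erase (Icc 1 n \ S)).biUnion id := by
          ext x
          rw [hN]
          simp only [mem_biUnion, mem_union]
          constructor
          · rintro ⟨A, hA | hA, hx⟩
            exacts [Or.inl ⟨A, hA, hx⟩, Or.inr ⟨A, hA, hx⟩]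
          · rintro (⟨A, hA, hx⟩ | ⟨A, hA, hx⟩)
            exacts [⟨A, Or.inl hA, hx⟩, ⟨A, Or.inr hA, hx⟩]
        rw [key, hU₀, hUT, union_comm]
        exact union_sdiff_of_subset hSV
    have hNsub : N ⊆ Fam n k := by
      intro A hA
      rcases hNmem.mp hA with ⟨h, -⟩ | ⟨h, -⟩
      · exact (hP1 M₀ hM₀P).1 h
      · exact (hP1 MT hMTP).1 h
    have hSnotN : S ∉ N := by
      intro h
      rcases hNmem.mp h with ⟨-, h⟩ | ⟨h, -⟩
      · exact h rfl
      · exact hSMT h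
    have hTnotN : Icc 1 n \ S ∉ N := by
      intro h
      rcases hNmem.mp h with ⟨h, -⟩ | ⟨-, h⟩
      · exact hTM₀ h
      · exact h rfl
    set P' := insert {S, Icc 1 n \ S} (insert N ((P.erase M₀).erase MT)) with hP'
    have hmemP' : ∀ {M : Finset (Finset ℕ)},
        M ∈ P' ↔ M = {S, Icc 1 n \ S} ∨ M = N ∨ (M ∈ P ∧ M ≠ M₀ ∧ M ≠ MT) := by
      intro M
      rw [hP', mem_insert, mem_insert, mem_erase, mem_erase]
      tauto
    have hP'1 : ∀ M ∈ P', M ⊆ Fam n k ∧ IsOneFactor (Icc 1 n) M := by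
      intro M hM
      rcases hmemP'.mp hM with rfl | rfl | ⟨hMP, -, -⟩
      · constructor
        · intro A hA
          rcases mem_insert.mp hA with rfl | hA
          · exact hSF
          · rw [mem_singleton.mp hA]; exact hTF
        · exact pair_isOneFactor hSV (card_pos.mp (by omega)) (card_pos.mp (by omega))
      · exact ⟨hNsub, hNfact⟩
      · exact hP1 M hMP
    have hP'2 : ∀ A ∈ Fam n k, ∃! M, M ∈ P' ∧ A ∈ M := by
      intro A hAF
      by_cases hAS : A = S ∨ A = Icc 1 n \ S
      · refine ⟨{S, Icc 1 n \ S}, ⟨hmemP'.mpr (Or.inl rfl), ?_⟩, ?_⟩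
        · rcases hAS with rfl | rfl
          · exact mem_insert_self _ _
          · exact mem_insert_of_mem (mem_singleton_self _)
        · rintro M' ⟨hM', hAM'⟩
          rcases hmemP'.mp hM' with rfl | rfl | ⟨hM'P, hne0, hneT⟩
          · rfl
          · exfalso
            rcases hAS with rfl | rfl
            · exact hSnotN hAM'
            · exact hTnotN hAM'
          · exfalso
            rcases hAS with h | h
            · exact hne0 ((hP2 A hAF).unique ⟨hM'P, hAM'⟩ ⟨hM₀P, by rw [h]; exact hSM₀⟩)
            · exact hneT ((hP2 A hAF).unique ⟨hM'P, hAM'⟩ ⟨hMTP, by rw [h]; exact hTMT⟩)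
      · push_neg at hAS
        obtain ⟨hAS1, hAS2⟩ := hAS
        by_cases hAN : A ∈ N
        · refine ⟨N, ⟨hmemP'.mpr (Or.inr (Or.inl rfl)), hAN⟩, ?_⟩
          rintro M' ⟨hM', hAM'⟩
          rcases hmemP'.mp hM' with rfl | rfl | ⟨hM'P, hne0, hneT⟩
          · exfalso
            rcases mem_insert.mp hAM' with rfl | h
            · exact hAS1 rfl
            · exact hAS2 (mem_singleton.mp h)
          · rfl
          · exfalso
            rcases hNmem.mp hAN with ⟨h, -⟩ | ⟨h, -⟩
            · exact hne0 ((hP2 A hAF).unique ⟨hM'P, hAM'⟩ ⟨hM₀P, h⟩)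
            · exact hneT ((hP2 A hAF).unique ⟨hM'P, hAM'⟩ ⟨hMTP, h⟩)
        · obtain ⟨MA, ⟨hMAP, hAMA⟩, huA⟩ := hP2 A hAF
          have hMA0 : MA ≠ M₀ := by
            rintro rfl
            exact hAN (hNmem.mpr (Or.inl ⟨hAMA, hAS1⟩))
          have hMAT : MA ≠ MT := by
            rintro rfl
            exact hAN (hNmem.mpr (Or.inr ⟨hAMA, hAS2⟩))
          refine ⟨MA, ⟨hmemP'.mpr (Or.inr (Or.inr ⟨hMAP, hMA0, hMAT⟩)), hAMA⟩, ?_⟩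
          rintro M' ⟨hM', hAM'⟩
          rcases hmemP'.mp hM' with rfl | rfl | ⟨hM'P, -, -⟩
          · exfalso
            rcases mem_insert.mp hAM' with rfl | h
            · exact hAS1 rfl
            · exact hAS2 (mem_singleton.mp h)
          · exact absurd hAM' hAN
          · exact huA M' ⟨hM'P, hAM'⟩
    -- the bad count decreases
    have hpairnotbad : ¬ Bad n k {S, Icc 1 n \ S} := by
      rintro ⟨B, hB, hBmid, hBne⟩
      rcases mem_insert.mp hB with rfl | h
      · exact hBne rfl
      · rw [mem_singleton.mp h, hVT, pair_comm] at hBne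
        exact hBne rfl
    have hMTbad : Bad n k MT := by
      refine ⟨Icc 1 n \ S, hTMT, by omega, ?_⟩
      intro heq
      apply hSMT
      rw [heq, hVT]
      exact mem_insert_of_mem (mem_singleton_self _)
    have hsub : P'.filter (Bad n k) ⊆
        insert N (((P.filter (Bad n k)).erase M₀).erase MT) := by
      intro M hM
      obtain ⟨hMP', hMbad⟩ := mem_filter.mp hM
      rcases hmemP'.mp hMP' with rfl | rfl | ⟨hMP, hne0, hneT⟩
      · exact absurd hMbad hpairnotbad
      · exact mem_insert_self _ _
      · exact mem_insert_of_mem (mem_erase.mpr ⟨hneT, mem_erase.mpr ⟨hne0, mem_filter.mpr ⟨hMP, hMbad⟩⟩⟩)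
    have hMTf : MT ∈ (P.filter (Bad n k)).erase M₀ :=
      mem_erase.mpr ⟨hMT0, mem_filter.mpr ⟨hMTP, hMTbad⟩⟩
    have hcard2 : (((P.filter (Bad n k)).erase M₀).erase MT).card
        = (P.filter (Bad n k)).card - 2 := by
      rw [card_erase_of_mem hMTf, card_erase_of_mem hM₀f]
      omega
    have hfin : (P'.filter (Bad n k)).card ≤ m := by
      calc (P'.filter (Bad n k)).card
          ≤ (insert N (((P.filter (Bad n k)).erase M₀).erase MT)).card := card_le_card hsub
        _ ≤ (((P.filter (Bad n k)).erase M₀).erase MT).card + 1 := card_insert_le _ _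
        _ ≤ m := by
            rw [hcard2]
            have h2 : 2 ≤ (P.filter (Bad n k)).card := by
              have hsub2 : ({M₀, MT} : Finset (Finset (Finset ℕ))) ⊆ P.filter (Bad n k) := by
                intro x hx
                rcases mem_insert.mp hx with rfl | hx
                · exact hM₀f
                · rw [mem_singleton.mp hx]; exact mem_of_mem_erase hMTf
              have hcp : ({M₀, MT} : Finset (Finset (Finset ℕ))).card = 2 :=
                card_pair (fun h => hMT0 h.symm)
              rw [← hcp]
              exact card_le_card hsub2
            omega
    exact ih P' hP'1 hP'2 hfin

theorem factorable_complement_equiv (n k : ℕ) (hn : 0 < n) (hk : 0 < k)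
    (h1 : n ≤ 2 * k) (h2 : k ≤ n - 1) :
    OneFactorable (Icc 1 n)
        (((Icc 1 n).powerset).filter (fun S => 1 ≤ S.card ∧ S.card ≤ k)) ↔
      OneFactorable (Icc 1 n)
        (((Icc 1 n).powerset).filter (fun S => 1 ≤ S.card ∧ S.card ≤ n - k - 1)) := by
  have hkn : k < n := by omega
  constructor
  · rintro ⟨P, hp1, hp2⟩
    exact forward_aux n k hn hkn h1 ((P.filter (Bad n k)).card) P hp1 hp2 le_rfl
  · intro h
    exact backward n k hn hkn h1 h
end

section
/- Let k ≥ 2 be an integer, j ≥ 3 an integer, r an integer with 1 ≤ r ≤ k−2, and n = j·k + r. Then C(n, k) = ∑_{i=1}^{k−1} ((j−1)/2)^i · C(n, k−i) + ((j−1)/2)^{k−1} · C(n, 1) + ∑_{i=1}^{k−1} ((j−1)/2)^{i−1} · ((r + 1 + j(i−1)) / (k − (i−1))) · C(n, k−i). -/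
open Finset in
theorem aux (k j r n : ℕ) (hk : 2 ≤ k) (hj : 3 ≤ j)
    (hr1 : 1 ≤ r) (hr2 : r ≤ k - 2) (hn : n = j * k + r) :
    ∀ m, m ≤ k - 1 →
    (Nat.choose n k : ℚ)
      = (∑ i ∈ Icc 1 m, (((j : ℚ) - 1) / 2) ^ i * (Nat.choose n (k - i) : ℚ))
        + (((j : ℚ) - 1) / 2) ^ m * (Nat.choose n (k - m) : ℚ)
        + ∑ i ∈ Icc 1 m, (((j : ℚ) - 1) / 2) ^ (i - 1)
            * (((r : ℚ) + 1 + (j : ℚ) * ((i : ℚ) - 1)) / ((k : ℚ) - ((i : ℚ) - 1)))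
            * (Nat.choose n (k - i) : ℚ) := by
  have hnk : n = (j-1)*k + r + k := by
    rw [hn]; have hj' : j = (j-1)+1 := by omega
    nth_rewrite 1 [hj']; ring
  intro m
  induction m with
  | zero => intro _; simp
  | succ m ih =>
    intro hm
    have hm' : m ≤ k - 1 := by omega
    rw [Finset.sum_Icc_succ_top (by omega : 1 ≤ m+1),
        Finset.sum_Icc_succ_top (by omega : 1 ≤ m+1)]
    rw [ih hm']
    have hkm : k - (m+1) + 1 = k - m := by omega
    have hnat : Nat.choose n (k-(m+1)+1) * (k-(m+1)+1)
        = Nat.choose n (k-(m+1)) * (n - (k-(m+1))) :=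
      Nat.choose_succ_right_eq n (k-(m+1))
    have hnsub : n - (k-(m+1)) = (j-1)*k + r + (m+1) := by omega
    rw [hnsub, hkm] at hnat
    have hKM : (k:ℚ) - m ≠ 0 := by
      have h : (m:ℚ) < k := by exact_mod_cast (by omega : m < k)
      linarith
    have key : (Nat.choose n (k-m) : ℚ) * ((k:ℚ) - m)
        = (((j:ℚ)-1)*k + r + (m+1)) * (Nat.choose n (k-(m+1)) : ℚ) := by
      have hc := congrArg (Nat.cast : ℕ → ℚ) hnat
      push_cast [Nat.cast_sub (show 1 ≤ j by omega),
        Nat.cast_sub (show m ≤ k by omega)] at hc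
      linear_combination hc
    have hX : (Nat.choose n (k-m):ℚ)
        = ((((j:ℚ)-1)*((k:ℚ)-m) + ((r:ℚ)+1+(j:ℚ)*m)) / ((k:ℚ)-m))
            * (Nat.choose n (k-(m+1)) : ℚ) := by
      rw [div_mul_eq_mul_div, eq_div_iff hKM]
      linear_combination key
    have step : (((j:ℚ)-1)/2)^m * (Nat.choose n (k-m) : ℚ)
        = (((j:ℚ)-1)/2)^(m+1) * (Nat.choose n (k-(m+1)) : ℚ)
          + (((j:ℚ)-1)/2)^(m+1) * (Nat.choose n (k-(m+1)) : ℚ)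
          + (((j:ℚ)-1)/2)^m * (((r:ℚ)+1+(j:ℚ)*m) / ((k:ℚ)-m))
              * (Nat.choose n (k-(m+1)) : ℚ) := by
      rw [pow_succ, hX]
      field_simp
      ring
    simp only [Nat.add_sub_cancel]
    push_cast
    linear_combination step

open Finset in
theorem choose_expansion_identity (k j r n : ℕ) (hk : 2 ≤ k) (hj : 3 ≤ j)
    (hr1 : 1 ≤ r) (hr2 : r ≤ k - 2) (hn : n = j * k + r) :
    (Nat.choose n k : ℚ)
      = (∑ i ∈ Icc 1 (k - 1), (((j : ℚ) - 1) / 2) ^ i * (Nat.choose n (k - i) : ℚ))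
        + (((j : ℚ) - 1) / 2) ^ (k - 1) * (Nat.choose n 1 : ℚ)
        + ∑ i ∈ Icc 1 (k - 1), (((j : ℚ) - 1) / 2) ^ (i - 1)
            * (((r : ℚ) + 1 + (j : ℚ) * ((i : ℚ) - 1)) / ((k : ℚ) - ((i : ℚ) - 1)))
            * (Nat.choose n (k - i) : ℚ) := by
  have h := aux k j r n hk hj hr1 hr2 hn (k-1) le_rfl
  rwa [show k - (k-1) = 1 by omega] at h
end

section
/- Let k ≥ 2 be an integer, n = j·k + (k−1) for an integer j ≥ 2, and suppose k−1 is excluded. Then ∑_{i=1}^{k−2} (j/2)·C(n, i) < C(n, k). -/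
lemma ratio_aux (k j n : ℕ) (hk : 2 ≤ k) (hj : 2 ≤ j)
    (hn : n = j * k + (k - 1)) (i : ℕ) (hi : i ≤ k - 1) :
    j * n.choose i ≤ n.choose (i + 1) := by
  have hm : j * (i + 1) ≤ j * k := Nat.mul_le_mul_left j (by omega)
  have h1 : j * (i + 1) ≤ n - i := by omega
  have h2 := Nat.choose_succ_right_eq n i
  have key : j * n.choose i * (i + 1) ≤ n.choose (i + 1) * (i + 1) := by
    calc j * n.choose i * (i + 1) = n.choose i * (j * (i + 1)) := by ring
      _ ≤ n.choose i * (n - i) := Nat.mul_le_mul_left _ h1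
      _ = n.choose (i + 1) * (i + 1) := h2.symm
  exact Nat.le_of_mul_le_mul_right key (Nat.succ_pos i)

open Finset in
lemma sum_lt_aux (k j n : ℕ) (hk : 2 ≤ k) (hj : 2 ≤ j)
    (hn : n = j * k + (k - 1)) :
    ∀ m, m ≤ k - 1 → ∑ i ∈ Icc 1 m, n.choose i < n.choose (m + 1) := by
  intro m
  induction m with
  | zero =>
    intro _
    have : Icc 1 0 = (∅ : Finset ℕ) := by decide
    rw [this, Finset.sum_empty, show (0:ℕ)+1 = 1 from rfl, Nat.choose_one_right]
    omega
  | succ m ih =>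
    intro hm
    rw [Finset.sum_Icc_succ_top (by omega)]
    have h1 := ih (by omega)
    have h2 := ratio_aux k j n hk hj hn (m + 1) (by omega)
    have h3 : 2 * n.choose (m + 1) ≤ j * n.choose (m + 1) :=
      Nat.mul_le_mul_right _ hj
    omega

open Finset in
theorem excluded_level_ineq (k j n : ℕ) (hk : 2 ≤ k) (hj : 2 ≤ j)
    (hn : n = j * k + (k - 1)) :
    ∑ i ∈ Icc 1 (k - 2), ((j : ℚ) / 2) * (Nat.choose n i : ℚ)
      < (Nat.choose n k : ℚ) := by
  have hB := sum_lt_aux k j n hk hj hn (k - 2) (by omega)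
  have hA := ratio_aux k j n hk hj hn (k - 1) (le_refl _)
  rw [show k - 2 + 1 = k - 1 by omega] at hB
  rw [show k - 1 + 1 = k by omega] at hA
  have hkn : k ≤ n := by
    have := Nat.le_mul_of_pos_left k (show 0 < j by omega)
    omega
  have hck : 0 < n.choose k := Nat.choose_pos hkn
  have hBQ : (∑ i ∈ Icc 1 (k - 2), (n.choose i : ℚ)) < (n.choose (k - 1) : ℚ) := by
    exact_mod_cast hB
  have hAQ : (j : ℚ) * (n.choose (k - 1) : ℚ) ≤ (n.choose k : ℚ) := by
    exact_mod_cast hA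
  have hjQ : (0 : ℚ) < (j : ℚ) / 2 := by positivity
  calc ∑ i ∈ Icc 1 (k - 2), ((j : ℚ) / 2) * (n.choose i : ℚ)
      = ((j : ℚ) / 2) * ∑ i ∈ Icc 1 (k - 2), (n.choose i : ℚ) := by
        rw [Finset.mul_sum]
    _ < ((j : ℚ) / 2) * (n.choose (k - 1) : ℚ) := by
        exact mul_lt_mul_of_pos_left hBQ hjQ
    _ = ((j : ℚ) * (n.choose (k - 1) : ℚ)) / 2 := by ring
    _ ≤ (n.choose k : ℚ) / 2 := by linarith
    _ < (n.choose k : ℚ) := by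
        have : (0 : ℚ) < (n.choose k : ℚ) := by exact_mod_cast hck
        linarith
end
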